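/- arXiv:1905.08834 — 7 statements merged into one kernel-verified Lean document; each statement's English description precedes it below -/
import Mathlib

section
/- Let Q be a ℤ/4ℤ-valued quadratic form on K whose associated bilinear form B is alternating (B(x,x) = 0 for all x ∈ K), and let r be the rank of Q. Then r is even, χ_Q(λ) is a real number for every λ ∈ K, and the value distribution is: χ_Q(λ) = 0 for exactly 2^m − 2^r values of λ ∈ K, χ_Q(λ) = 2^{m − r/2} for exactly (2^r + 2^{r/2})/2 values of λ, and χ_Q(λ) = −2^{m − r/2} for exactly (2^r − 2^{r/2})/2 values of λ. -/
open Finset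

/-- The inclusion `𝔽₂ → ℤ/4ℤ` sending `0 ↦ 0` and `1 ↦ 1`. -/
def iota (e : ZMod 2) : ZMod 4 := (e.val : ZMod 4)

/-- The radical of a symmetric `𝔽₂`-bilinear form `B` on `K`,
as an `𝔽₂`-subspace of `K`. -/
def radB {K : Type*} [Field K] [Algebra (ZMod 2) K] (B : K → K → ZMod 2)
    (hBadd : ∀ x x' y : K, B (x + x') y = B x y + B x' y) :
    Submodule (ZMod 2) K where
  carrier := {x | ∀ y, B x y = 0}
  add_mem' := by
    intro a b ha hb y
    rw [hBadd, ha y, hb y, add_zero]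
  zero_mem' := by
    intro y
    have h := hBadd 0 0 y
    rw [add_zero] at h
    exact (left_eq_add.mp h)
  smul_mem' := by
    intro c x hx
    have hc : c = 0 ∨ c = 1 := by revert c; decide
    rcases hc with rfl | rfl
    · rw [zero_smul]
      intro y
      have h := hBadd 0 0 y
      rw [add_zero] at h
      exact (left_eq_add.mp h)
    · rw [one_smul]; exact hx

/-- The Walsh transform `χ_Q(λ) = ∑_{x∈K} i^{Q(x)} (−1)^{tr(λx)}` of a
`ℤ/4ℤ`-valued function `Q` on the finite field `K`. -/
noncomputable def walsh {K : Type*} [Field K] [Fintype K] [Algebra (ZMod 2) K]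
    (Q : K → ZMod 4) (lam : K) : ℂ :=
  ∑ x : K, Complex.I ^ (Q x).val * (-1 : ℂ) ^ (Algebra.trace (ZMod 2) K (lam * x)).val

/- ### Auxiliary definitions and lemmas -/

/-- `(-1)^e` as a complex number, for `e : ZMod 2`. -/
noncomputable def nu (e : ZMod 2) : ℂ := (-1) ^ e.val

lemma nu_add (a b : ZMod 2) : nu (a + b) = nu a * nu b := by
  unfold nu
  have h : (a + b).val % 2 = (a.val + b.val) % 2 := by revert a b; decide
  rw [neg_one_pow_eq_pow_mod_two, h, ← neg_one_pow_eq_pow_mod_two, pow_add]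

lemma nu_sq (a : ZMod 2) : nu a * nu a = 1 := by
  rw [← nu_add, show a + a = 0 from by revert a; decide]
  rfl

lemma nu_zero : nu 0 = 1 := rfl

lemma nu_one : nu 1 = -1 := by
  unfold nu
  rw [show ((1 : ZMod 2)).val = 1 from rfl, pow_one]

lemma nu_int (a : ZMod 2) : nu a = (((-1 : ℤ) ^ a.val : ℤ) : ℂ) := by
  unfold nu; push_cast; ring

lemma key_prod (A T Z W G : ℂ) (hA : A * A = 1) (hT : T * T = 1) :
    A * T * (A * Z * G * (T * W)) = Z * W * G := by
  calc A * T * (A * Z * G * (T * W))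
      = (A * A) * ((T * T) * (Z * W * G)) := by ring
    _ = Z * W * G := by rw [hA, hT, one_mul, one_mul]

lemma sum_shift_vanish {K : Type*} [AddCommGroup K] {R : Finset K} (f : K → ℂ)
    (a : K) (haR : a ∈ R) (hmem : ∀ z ∈ R, a + z ∈ R) (h2 : ∀ x : K, x + x = 0)
    (hf : ∀ z ∈ R, f (a + z) = - f z) : ∑ z ∈ R, f z = 0 := by
  have hinv : ∀ z : K, a + (a + z) = z := fun z => by rw [← add_assoc, h2, zero_add]
  have h : ∑ z ∈ R, f (a + z) = ∑ z ∈ R, f z := by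
    refine Finset.sum_equiv (Equiv.addLeft a) (fun z => ?_) (fun z _ => by simp)
    constructor
    · intro hz; simpa using hmem z hz
    · intro hz
      have := hmem _ (by simpa using hz)
      rwa [hinv] at this
  have h3 : ∑ z ∈ R, f z = - ∑ z ∈ R, f z := by
    calc ∑ z ∈ R, f z = ∑ z ∈ R, f (a + z) := h.symm
      _ = ∑ z ∈ R, - f z := Finset.sum_congr rfl hf
      _ = - ∑ z ∈ R, f z := by simp
  have h4 : (2 : ℂ) * ∑ z ∈ R, f z = 0 := by linear_combination h3
  rcases mul_eq_zero.mp h4 with h5 | h5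
  · norm_num at h5
  · exact h5

lemma char_sum_zero {K : Type*} [AddCommGroup K] [Fintype K] (φ : K → ZMod 2)
    (hadd : ∀ x y : K, φ (x + y) = φ x + φ y) (h2 : ∀ x : K, x + x = 0)
    (a : K) (ha : φ a ≠ 0) : ∑ x : K, nu (φ x) = 0 := by
  have ha1 : φ a = 1 := by
    rcases (show ∀ e : ZMod 2, e = 0 ∨ e = 1 by decide) (φ a) with h | h
    · exact absurd h ha
    · exact h
  refine sum_shift_vanish (fun x => nu (φ x)) a (Finset.mem_univ a)
    (fun z _ => Finset.mem_univ _) h2 (fun z _ => ?_)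
  show nu (φ (a + z)) = - nu (φ z)
  rw [hadd, ha1, nu_add, nu_one, neg_one_mul]

open scoped Classical in
lemma char_sum {K : Type*} [AddCommGroup K] [Fintype K] (φ : K → ZMod 2)
    (hadd : ∀ x y : K, φ (x + y) = φ x + φ y) (h2 : ∀ x : K, x + x = 0) :
    ∑ x : K, nu (φ x) = if ∀ x, φ x = 0 then (Fintype.card K : ℂ) else 0 := by
  by_cases h : ∀ x, φ x = 0
  · rw [if_pos h]
    rw [Finset.sum_congr rfl (fun x _ => by rw [h x, nu_zero]), Finset.sum_const,
      Finset.card_univ, nsmul_eq_mul, mul_one]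
  · rw [if_neg h]
    push_neg at h
    obtain ⟨a, ha⟩ := h
    exact char_sum_zero φ hadd h2 a ha

/-- `ε` with `Q = 2ε`. -/
def eps {K : Type*} (Q : K → ZMod 4) (x : K) : ZMod 2 := if Q x = 0 then 0 else 1

/-- `tr(λ x)`. -/
noncomputable def trf {K : Type*} [Field K] [Algebra (ZMod 2) K] (lam x : K) : ZMod 2 :=
  Algebra.trace (ZMod 2) K (lam * x)

/-- Integer-valued Walsh transform. -/
noncomputable def tchi {K : Type*} [Field K] [Fintype K] [Algebra (ZMod 2) K]
    (Q : K → ZMod 4) (lam : K) : ℤ :=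
  ∑ x : K, (-1 : ℤ) ^ ((eps Q x + trf lam x).val)

set_option maxHeartbeats 2000000 in
/-- Value distribution of the Walsh transform of an alternating `ℤ/4ℤ`-valued
quadratic form of rank `r` on `K = 𝔽_{2^m}`: `r` is even, all Walsh values are real,
and the values `0`, `2^{m-r/2}`, `−2^{m-r/2}` occur with frequencies
`2^m − 2^r`, `(2^r + 2^{r/2})/2`, `(2^r − 2^{r/2})/2` respectively. -/
theorem stmt1 (m : ℕ) (hm : 1 ≤ m) (K : Type) [Field K] [Fintype K]
    [Algebra (ZMod 2) K] (hcard : Fintype.card K = 2 ^ m)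
    (Q : K → ZMod 4) (B : K → K → ZMod 2)
    (hQ0 : Q 0 = 0)
    (hBsymm : ∀ x y : K, B x y = B y x)
    (hBadd : ∀ x x' y : K, B (x + x') y = B x y + B x' y)
    (hQB : ∀ x y : K, Q (x + y) = Q x + Q y + 2 * iota (B x y))
    (halt : ∀ x : K, B x x = 0)
    (r : ℕ) (hr : r = m - Module.finrank (ZMod 2) (radB B hBadd)) :
    Even r ∧
    (∀ lam : K, ∃ t : ℝ, walsh Q lam = (t : ℂ)) ∧
    {lam : K | walsh Q lam = 0}.ncard = 2 ^ m - 2 ^ r ∧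
    {lam : K | walsh Q lam = ((2 : ℂ) ^ (m - r / 2))}.ncard = (2 ^ r + 2 ^ (r / 2)) / 2 ∧
    {lam : K | walsh Q lam = -((2 : ℂ) ^ (m - r / 2))}.ncard = (2 ^ r - 2 ^ (r / 2)) / 2 := by
  classical
  -- characteristic 2
  have h2 : ∀ x : K, x + x = 0 := by
    intro x
    have h := two_smul (ZMod 2) x
    rw [show (2 : ZMod 2) = 0 by decide, zero_smul] at h
    exact h.symm
  -- dimensions
  set d : ℕ := Module.finrank (ZMod 2) (radB B hBadd) with hd
  have hfin : Module.finrank (ZMod 2) K = m := by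
    have h := Module.card_eq_pow_finrank (K := ZMod 2) (V := K)
    rw [hcard, show Fintype.card (ZMod 2) = 2 from rfl] at h
    exact (Nat.pow_right_injective (le_refl 2) h.symm)
  have hdm : d ≤ m := by
    rw [hd, ← hfin]
    exact Submodule.finrank_le _
  -- membership in the radical
  have hiffrad : ∀ w : K, w ∈ radB B hBadd ↔ ∀ y, B w y = 0 := fun w => Iff.rfl
  -- Q takes values in {0, 2}
  have hQ2 : ∀ x : K, Q x = 0 ∨ Q x = 2 := by
    intro x
    have h := hQB x x
    rw [h2 x, hQ0, halt] at h
    rw [show iota 0 = 0 from rfl, mul_zero, add_zero] at h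
    revert h
    generalize Q x = q
    revert q; decide
  have hQe : ∀ x : K, Q x = 2 * iota (eps Q x) := by
    intro x
    by_cases hx : Q x = 0
    · rw [hx, eps, if_pos hx]; rfl
    · rw [(hQ2 x).resolve_left hx, eps, if_neg hx]; rfl
  have headd : ∀ x y : K, eps Q (x + y) = eps Q x + eps Q y + B x y := by
    intro x y
    have hiota : ∀ a b c dd : ZMod 2,
        2 * iota dd = 2 * iota a + 2 * iota b + 2 * iota c → dd = a + b + c := by decide
    apply hiota (eps Q x) (eps Q y) (B x y) (eps Q (x + y))
    calc 2 * iota (eps Q (x + y)) = Q (x + y) := (hQe _).symm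
      _ = Q x + Q y + 2 * iota (B x y) := hQB x y
      _ = 2 * iota (eps Q x) + 2 * iota (eps Q y) + 2 * iota (B x y) := by
          rw [← hQe, ← hQe]
  have heps0 : eps Q 0 = 0 := if_pos hQ0
  -- rewriting the Walsh transform
  have hIQ : ∀ x : K, Complex.I ^ (Q x).val = nu (eps Q x) := by
    intro x
    by_cases hx : Q x = 0
    · rw [hx, show ((0 : ZMod 4)).val = 0 from rfl, pow_zero, eps, if_pos hx, nu_zero]
    · rw [(hQ2 x).resolve_left hx, show ((2 : ZMod 4)).val = 2 from rfl, eps, if_neg hx,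
        nu_one, Complex.I_sq]
  have hw : ∀ lam : K, walsh Q lam = ∑ x : K, nu (eps Q x) * nu (trf lam x) := by
    intro lam
    unfold walsh
    exact Finset.sum_congr rfl fun x _ => by rw [hIQ x]; rfl
  -- trf properties
  have htadd1 : ∀ (lam x y : K), trf lam (x + y) = trf lam x + trf lam y := by
    intro lam x y
    unfold trf
    rw [mul_add, map_add]
  have htadd2 : ∀ (lam mu x : K), trf (lam + mu) x = trf lam x + trf mu x := by
    intro lam mu x
    unfold trf
    rw [add_mul, map_add]
  -- trace nondegeneracy
  have htr0 : ∀ a : K, a ≠ 0 → ∃ lam : K, trf lam a ≠ 0 := by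
    intro a ha
    by_contra h
    push_neg at h
    refine ha ((traceForm_nondegenerate (ZMod 2) K).1 a (fun y => ?_))
    have := h y
    unfold trf at this
    simpa [Algebra.traceForm_apply, mul_comm] using this
  -- character sum over all of K against λ
  have hTsum : ∀ w : K, ∑ lam : K, nu (trf lam w) = if w = 0 then ((2 : ℂ) ^ m) else 0 := by
    intro w
    by_cases hw0 : w = 0
    · rw [if_pos hw0]
      subst hw0
      have : ∀ lam : K, trf lam (0 : K) = 0 := by
        intro lam; unfold trf; rw [mul_zero, map_zero]
      rw [Finset.sum_congr rfl (fun lam _ => by rw [this lam, nu_zero]), Finset.sum_const,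
        Finset.card_univ, hcard, nsmul_eq_mul, mul_one]
      push_cast; ring
    · rw [if_neg hw0]
      obtain ⟨lam0, hl⟩ := htr0 w hw0
      exact char_sum_zero (fun lam => trf lam w) (fun x y => htadd2 x y w) h2 lam0 hl
  -- the radical as a Finset
  set Rfin : Finset K := univ.filter (fun z : K => z ∈ radB B hBadd) with hRfin
  letI : Fintype {x : K // x ∈ radB B hBadd} := Subtype.fintype _
  have hRcard : Rfin.card = 2 ^ d := by
    have h1 : Fintype.card {x : K // x ∈ radB B hBadd} = 2 ^ d := by
      have h := Module.card_eq_pow_finrank (K := ZMod 2) (V := {x : K // x ∈ radB B hBadd})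
      rw [show Fintype.card (ZMod 2) = 2 from rfl] at h
      exact h
    rw [← h1, hRfin]
    exact (Fintype.card_subtype _).symm
  -- square of the Walsh transform
  have hsq : ∀ lam : K, (walsh Q lam) ^ 2
      = (2 : ℂ) ^ m * ∑ z ∈ Rfin, nu (eps Q z) * nu (trf lam z) := by
    intro lam
    calc (walsh Q lam) ^ 2
        = (∑ x : K, nu (eps Q x) * nu (trf lam x)) * (∑ y : K, nu (eps Q y) * nu (trf lam y)) := by
          rw [hw lam, sq]
      _ = ∑ x : K, ∑ y : K, (nu (eps Q x) * nu (trf lam x)) * (nu (eps Q y) * nu (trf lam y)) :=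
          Finset.sum_mul_sum _ _ _ _
      _ = ∑ x : K, ∑ z : K,
            (nu (eps Q x) * nu (trf lam x)) * (nu (eps Q (x + z)) * nu (trf lam (x + z))) := by
          refine Finset.sum_congr rfl fun x _ => ?_
          refine Finset.sum_nbij' (fun y => x + y) (fun z => x + z)
            (fun a _ => Finset.mem_univ _) (fun a _ => Finset.mem_univ _)
            (fun a _ => by simp only [← add_assoc, h2, zero_add])
            (fun a _ => by simp only [← add_assoc, h2, zero_add]) (fun a _ => ?_)
          simp only [← add_assoc, h2, zero_add]
      _ = ∑ x : K, ∑ z : K, (nu (eps Q z) * nu (trf lam z)) * nu (B x z) := by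
          refine Finset.sum_congr rfl fun x _ => Finset.sum_congr rfl fun z _ => ?_
          rw [headd, nu_add, nu_add, htadd1, nu_add]
          exact key_prod _ _ _ _ _ (nu_sq _) (nu_sq _)
      _ = ∑ z : K, ∑ x : K, (nu (eps Q z) * nu (trf lam z)) * nu (B x z) := Finset.sum_comm
      _ = ∑ z : K, (nu (eps Q z) * nu (trf lam z)) * ∑ x : K, nu (B x z) := by
          refine Finset.sum_congr rfl fun z _ => (Finset.mul_sum _ _ _).symm
      _ = ∑ z : K, (if z ∈ radB B hBadd then (nu (eps Q z) * nu (trf lam z)) * (2 : ℂ) ^ m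
            else 0) := by
          refine Finset.sum_congr rfl fun z _ => ?_
          have hcs := char_sum (fun x : K => B x z) (fun x y => hBadd x y z) h2
          rw [hcard] at hcs
          push_cast at hcs
          by_cases hz : z ∈ radB B hBadd
          · rw [if_pos hz, hcs, if_pos (fun x => by rw [hBsymm]; exact ((hiffrad z).mp hz) x)]
          · rw [if_neg hz, hcs, if_neg, mul_zero]
            intro hall
            exact hz ((hiffrad z).mpr (fun y => by rw [hBsymm]; exact hall y))
      _ = ∑ z ∈ Rfin, (nu (eps Q z) * nu (trf lam z)) * (2 : ℂ) ^ m := by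
          rw [hRfin]
          exact (Finset.sum_filter _ _).symm
      _ = (2 : ℂ) ^ m * ∑ z ∈ Rfin, nu (eps Q z) * nu (trf lam z) := by
          rw [← Finset.sum_mul, mul_comm]
  -- sum over the radical
  have hradsum : ∀ lam : K,
      (∑ z ∈ Rfin, nu (eps Q z) * nu (trf lam z)) = 0 ∨
      (∑ z ∈ Rfin, nu (eps Q z) * nu (trf lam z)) = (2 : ℂ) ^ d := by
    intro lam
    by_cases hψ : ∀ z ∈ Rfin, eps Q z + trf lam z = 0
    · right
      have : ∀ z ∈ Rfin, nu (eps Q z) * nu (trf lam z) = 1 := by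
        intro z hz
        rw [← nu_add, hψ z hz, nu_zero]
      rw [Finset.sum_congr rfl this, Finset.sum_const, hRcard, nsmul_eq_mul, mul_one]
      push_cast; ring
    · left
      push_neg at hψ
      obtain ⟨a, haR, ha⟩ := hψ
      have haRad : a ∈ radB B hBadd := (Finset.mem_filter.mp haR).2
      have ha1 : eps Q a + trf lam a = 1 := by
        rcases (show ∀ e : ZMod 2, e = 0 ∨ e = 1 by decide) (eps Q a + trf lam a) with h | h
        · exact absurd h ha
        · exact h
      refine sum_shift_vanish (fun z => nu (eps Q z) * nu (trf lam z)) a haR ?_ h2 ?_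
      · intro z hz
        rw [hRfin, Finset.mem_filter]
        exact ⟨Finset.mem_univ _, Submodule.add_mem _ haRad (Finset.mem_filter.mp hz).2⟩
      · intro z hz
        show nu (eps Q (a + z)) * nu (trf lam (a + z)) = -(nu (eps Q z) * nu (trf lam z))
        have hBaz : B a z = 0 := ((hiffrad a).mp haRad) z
        rw [headd, hBaz, add_zero, htadd1, nu_add, nu_add]
        have h1 : nu (eps Q a) * nu (trf lam a) = -1 := by
          rw [← nu_add, ha1, nu_one]
        calc (nu (eps Q a) * nu (eps Q z)) * (nu (trf lam a) * nu (trf lam z))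
            = (nu (eps Q a) * nu (trf lam a)) * (nu (eps Q z) * nu (trf lam z)) := by ring
          _ = -(nu (eps Q z) * nu (trf lam z)) := by rw [h1]; ring
  have hsq3 : ∀ lam : K, (walsh Q lam) ^ 2 = 0 ∨ (walsh Q lam) ^ 2 = (2 : ℂ) ^ (m + d) := by
    intro lam
    rcases hradsum lam with h | h
    · left; rw [hsq lam, h, mul_zero]
    · right; rw [hsq lam, h, ← pow_add]
  -- Parseval
  have hPar : ∑ lam : K, (walsh Q lam) ^ 2 = (2 : ℂ) ^ (2 * m) := by
    calc ∑ lam : K, (walsh Q lam) ^ 2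
        = ∑ lam : K, ∑ x : K, ∑ y : K,
            (nu (eps Q x) * nu (trf lam x)) * (nu (eps Q y) * nu (trf lam y)) := by
          refine Finset.sum_congr rfl fun lam _ => ?_
          rw [hw lam, sq]
          exact Finset.sum_mul_sum _ _ _ _
      _ = ∑ x : K, ∑ y : K, ∑ lam : K,
            (nu (eps Q x) * nu (trf lam x)) * (nu (eps Q y) * nu (trf lam y)) := by
          rw [Finset.sum_comm]
          exact Finset.sum_congr rfl fun x _ => Finset.sum_comm
      _ = ∑ x : K, ∑ y : K, (nu (eps Q x) * nu (eps Q y)) * ∑ lam : K, nu (trf lam (x + y)) := by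
          refine Finset.sum_congr rfl fun x _ => Finset.sum_congr rfl fun y _ => ?_
          rw [Finset.mul_sum]
          refine Finset.sum_congr rfl fun lam _ => ?_
          rw [show trf lam (x + y) = trf lam x + trf lam y from htadd1 lam x y, nu_add]
          ring
      _ = ∑ x : K, ∑ y : K, (nu (eps Q x) * nu (eps Q y)) * (if x + y = 0 then (2:ℂ)^m else 0) := by
          refine Finset.sum_congr rfl fun x _ => Finset.sum_congr rfl fun y _ => ?_
          rw [hTsum (x + y)]
      _ = ∑ x : K, (2 : ℂ) ^ m := by
          refine Finset.sum_congr rfl fun x _ => ?_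
          rw [Finset.sum_eq_single x]
          · rw [if_pos (h2 x), nu_sq, one_mul]
          · intro y _ hyx
            rw [if_neg, mul_zero]
            intro hxy
            apply hyx
            have : x + (x + y) = x + 0 := by rw [hxy]
            rw [← add_assoc, h2, zero_add, add_zero] at this
            exact this
          · intro h; exact absurd (Finset.mem_univ x) h
      _ = (2 : ℂ) ^ (2 * m) := by
          rw [Finset.sum_const, Finset.card_univ, hcard, nsmul_eq_mul, two_mul, pow_add]
          push_cast; ring
  -- mean value
  have hMean : ∑ lam : K, walsh Q lam = (2 : ℂ) ^ m := by
    calc ∑ lam : K, walsh Q lam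
        = ∑ lam : K, ∑ x : K, nu (eps Q x) * nu (trf lam x) := Finset.sum_congr rfl fun lam _ => hw lam
      _ = ∑ x : K, ∑ lam : K, nu (eps Q x) * nu (trf lam x) := Finset.sum_comm
      _ = ∑ x : K, nu (eps Q x) * ∑ lam : K, nu (trf lam x) := by
          refine Finset.sum_congr rfl fun x _ => (Finset.mul_sum _ _ _).symm
      _ = ∑ x : K, nu (eps Q x) * (if x = 0 then (2 : ℂ) ^ m else 0) := by
          refine Finset.sum_congr rfl fun x _ => by rw [hTsum x]
      _ = (2 : ℂ) ^ m := by
          rw [Finset.sum_eq_single 0]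
          · rw [if_pos rfl, heps0, nu_zero, one_mul]
          · intro y _ hy
            rw [if_neg hy, mul_zero]
          · intro h; exact absurd (Finset.mem_univ 0) h
  -- integer-valued version
  have hwt : ∀ lam : K, walsh Q lam = ((tchi Q lam : ℤ) : ℂ) := by
    intro lam
    rw [hw lam]
    unfold tchi
    push_cast
    refine Finset.sum_congr rfl fun x _ => ?_
    rw [← nu_add, nu_int]
    push_cast; ring
  have ht2 : ∀ lam : K, (tchi Q lam) ^ 2 = 0 ∨ (tchi Q lam) ^ 2 = 2 ^ (m + d) := by
    intro lam
    rcases hsq3 lam with h | h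
    · left
      have hc : ((tchi Q lam ^ 2 : ℤ) : ℂ) = ((0 : ℤ) : ℂ) := by
        push_cast
        rw [← hwt lam, h]
      exact_mod_cast hc
    · right
      have hc : ((tchi Q lam ^ 2 : ℤ) : ℂ) = ((2 ^ (m + d) : ℤ) : ℂ) := by
        push_cast
        rw [← hwt lam, h]
      exact_mod_cast hc
  -- integer sums
  have htsum1 : ∑ lam : K, tchi Q lam = 2 ^ m := by
    have hc : ((∑ lam : K, tchi Q lam : ℤ) : ℂ) = (((2 : ℤ) ^ m : ℤ) : ℂ) := by
      push_cast
      rw [Finset.sum_congr rfl (fun lam _ => (hwt lam).symm), hMean]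
    exact_mod_cast hc
  have htsum2 : ∑ lam : K, (tchi Q lam) ^ 2 = 2 ^ (2 * m) := by
    have hc : ((∑ lam : K, (tchi Q lam) ^ 2 : ℤ) : ℂ) = (((2 : ℤ) ^ (2 * m) : ℤ) : ℂ) := by
      push_cast
      rw [Finset.sum_congr rfl (fun lam _ => by rw [← hwt lam]), hPar]
    exact_mod_cast hc
  -- r is even
  have hex : ∃ lam : K, tchi Q lam ≠ 0 := by
    by_contra h
    push_neg at h
    have hz : ∑ lam : K, (tchi Q lam) ^ 2 = 0 :=
      Finset.sum_eq_zero (fun lam _ => by rw [h lam]; ring)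
    rw [hz] at htsum2
    exact absurd htsum2.symm (pow_ne_zero _ (by norm_num))
  obtain ⟨lam0, hlam0⟩ := hex
  have h0 : (tchi Q lam0) ^ 2 = 2 ^ (m + d) := (ht2 lam0).resolve_left (pow_ne_zero 2 hlam0)
  have hnat : (tchi Q lam0).natAbs ^ 2 = 2 ^ (m + d) := by
    have := congrArg Int.natAbs h0
    simpa [Int.natAbs_pow] using this
  have hdvd : (tchi Q lam0).natAbs ∣ 2 ^ (m + d) := hnat ▸ dvd_pow_self _ two_ne_zero
  obtain ⟨j, hjle, hj⟩ := (Nat.dvd_prime_pow Nat.prime_two).mp hdvd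
  have hmd : m + d = 2 * j := by
    have h1 : (2 : ℕ) ^ (j * 2) = 2 ^ (m + d) := by
      rw [pow_mul, ← hj]; exact hnat
    have := Nat.pow_right_injective (le_refl 2) h1
    omega
  obtain ⟨s, hs1, hs2⟩ : ∃ s : ℕ, r = 2 * s ∧ 2 * (m - s) = m + d :=
    ⟨j - d, by omega, by omega⟩
  have hsm : s ≤ m := by omega
  -- the three possible values
  set c : ℤ := 2 ^ (m - s) with hc
  have hcpos : 0 < c := by positivity
  have hc2 : c ^ 2 = 2 ^ (m + d) := by
    rw [hc, ← pow_mul, show (m - s) * 2 = m + d from by omega]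
  have hval : ∀ lam : K, tchi Q lam = 0 ∨ tchi Q lam = c ∨ tchi Q lam = -c := by
    intro lam
    rcases ht2 lam with h | h
    · left
      exact pow_eq_zero_iff (two_ne_zero) |>.mp h
    · right
      have h' : (tchi Q lam - c) * (tchi Q lam + c) = 0 := by linear_combination h - hc2
      rcases mul_eq_zero.mp h' with h'' | h''
      · left; linarith
      · right; linarith
  -- counting
  set Pc : Finset K := univ.filter (fun lam : K => tchi Q lam = c) with hPc
  set Pn : Finset K := univ.filter (fun lam : K => tchi Q lam = -c) with hPn
  set P0 : Finset K := univ.filter (fun lam : K => tchi Q lam = 0) with hP0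
  have hdisj1 : Disjoint Pc Pn := by
    rw [Finset.disjoint_left]
    intro lam h1 h2
    have e1 := (Finset.mem_filter.mp h1).2
    have e2 := (Finset.mem_filter.mp h2).2
    rw [e1] at e2
    linarith
  have hdisj2 : Disjoint (Pc ∪ Pn) P0 := by
    rw [Finset.disjoint_left]
    intro lam h1 h2
    have e2 := (Finset.mem_filter.mp h2).2
    rcases Finset.mem_union.mp h1 with h1 | h1
    · have e1 := (Finset.mem_filter.mp h1).2
      rw [e2] at e1; linarith
    · have e1 := (Finset.mem_filter.mp h1).2
      rw [e2] at e1; linarith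
  have hcover : Pc ∪ Pn ∪ P0 = univ := by
    ext lam
    simp only [hPc, hPn, hP0, Finset.mem_union, Finset.mem_filter, Finset.mem_univ, true_and,
      iff_true]
    rcases hval lam with h | h | h
    · right; exact h
    · left; left; exact h
    · left; right; exact h
  have hcards : Pc.card + Pn.card + P0.card = 2 ^ m := by
    have h := congrArg Finset.card hcover
    rw [Finset.card_union_of_disjoint hdisj2, Finset.card_union_of_disjoint hdisj1,
      Finset.card_univ, hcard] at h
    exact h
  have hsplit : ∀ f : K → ℤ,
      ∑ lam : K, f lam = (∑ lam ∈ Pc, f lam + ∑ lam ∈ Pn, f lam) + ∑ lam ∈ P0, f lam := by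
    intro f
    rw [← Finset.sum_union hdisj1, ← Finset.sum_union hdisj2, hcover]
  -- the three sums
  have hsumc : ∑ lam ∈ Pc, tchi Q lam = (Pc.card : ℤ) * c := by
    rw [Finset.sum_congr rfl (fun lam hl => (Finset.mem_filter.mp hl).2), Finset.sum_const,
      nsmul_eq_mul]
  have hsumn : ∑ lam ∈ Pn, tchi Q lam = (Pn.card : ℤ) * (-c) := by
    rw [Finset.sum_congr rfl (fun lam hl => (Finset.mem_filter.mp hl).2), Finset.sum_const,
      nsmul_eq_mul]
  have hsum0 : ∑ lam ∈ P0, tchi Q lam = 0 :=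
    Finset.sum_eq_zero (fun lam hl => (Finset.mem_filter.mp hl).2)
  have hsqc : ∑ lam ∈ Pc, (tchi Q lam) ^ 2 = (Pc.card : ℤ) * c ^ 2 := by
    rw [Finset.sum_congr rfl (fun lam hl => by rw [(Finset.mem_filter.mp hl).2]),
      Finset.sum_const, nsmul_eq_mul]
  have hsqn : ∑ lam ∈ Pn, (tchi Q lam) ^ 2 = (Pn.card : ℤ) * c ^ 2 := by
    rw [Finset.sum_congr rfl (fun lam hl => by rw [(Finset.mem_filter.mp hl).2]),
      Finset.sum_const, nsmul_eq_mul]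
    ring
  have hsq0 : ∑ lam ∈ P0, (tchi Q lam) ^ 2 = 0 :=
    Finset.sum_eq_zero (fun lam hl => by rw [(Finset.mem_filter.mp hl).2]; ring)
  have e1 : ((Pc.card : ℤ) * c + (Pn.card : ℤ) * (-c)) + 0 = 2 ^ m := by
    rw [← hsumc, ← hsumn, ← hsum0, ← hsplit]
    exact htsum1
  have e2 : ((Pc.card : ℤ) * c ^ 2 + (Pn.card : ℤ) * c ^ 2) + 0 = 2 ^ (2 * m) := by
    rw [← hsqc, ← hsqn, ← hsq0, ← hsplit]
    exact htsum2
  -- solve the linear system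
  have hpow1 : (2 : ℤ) ^ (2 * m) = 2 ^ (m + d) * 2 ^ r := by
    rw [← pow_add, show m + d + r = 2 * m from by omega]
  have hpow2 : (2 : ℤ) ^ m = 2 ^ s * c := by
    rw [hc, ← pow_add, show s + (m - s) = m from by omega]
  have hab : (Pc.card : ℤ) + (Pn.card : ℤ) = 2 ^ r := by
    have h1 : ((Pc.card : ℤ) + (Pn.card : ℤ)) * c ^ 2 = 2 ^ r * c ^ 2 := by
      rw [hpow1, ← hc2] at e2
      linarith [e2]
    exact mul_right_cancel₀ (by positivity) h1
  have hamb : (Pc.card : ℤ) - (Pn.card : ℤ) = 2 ^ s := by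
    have h1 : ((Pc.card : ℤ) - (Pn.card : ℤ)) * c = 2 ^ s * c := by
      rw [← hpow2]
      linarith [e1]
    exact mul_right_cancel₀ (by positivity) h1
  -- convert to natural-number equations
  have hab' : Pc.card + Pn.card = 2 ^ r := by exact_mod_cast hab
  have hamb' : Pc.card = Pn.card + 2 ^ s := by
    have h1 : (Pc.card : ℤ) = (Pn.card : ℤ) + ((2 ^ s : ℕ) : ℤ) := by push_cast; linarith
    exact_mod_cast h1
  have hle : 2 ^ r ≤ 2 ^ m := Nat.pow_le_pow_right (by norm_num) (by omega)
  have hP0card : P0.card = 2 ^ m - 2 ^ r := by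
    have h1 := hcards
    have h2' := hab'
    have h3 := hle
    generalize (2 : ℕ) ^ m = M at h1 h3 ⊢
    generalize (2 : ℕ) ^ r = R at h2' h3 ⊢
    omega
  have hPccard : Pc.card = (2 ^ r + 2 ^ s) / 2 := by
    have h2' := hab'
    have h3 := hamb'
    generalize (2 : ℕ) ^ r = R at h2' ⊢
    generalize (2 : ℕ) ^ s = S at h3 ⊢
    omega
  have hPncard : Pn.card = (2 ^ r - 2 ^ s) / 2 := by
    have h2' := hab'
    have h3 := hamb'
    generalize (2 : ℕ) ^ r = R at h2' ⊢
    generalize (2 : ℕ) ^ s = S at h3 ⊢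
    omega
  -- identify the level sets
  have hrs : r / 2 = s := by omega
  have hcastc : ((c : ℤ) : ℂ) = (2 : ℂ) ^ (m - r / 2) := by
    rw [hrs, hc]
    push_cast
    ring
  have hset0 : {lam : K | walsh Q lam = 0} = (P0 : Set K) := by
    ext lam
    simp only [Set.mem_setOf_eq, hP0, Finset.coe_filter, Finset.mem_univ, true_and]
    rw [hwt lam]
    exact_mod_cast Iff.rfl
  have hsetc : {lam : K | walsh Q lam = ((2 : ℂ) ^ (m - r / 2))} = (Pc : Set K) := by
    ext lam
    simp only [Set.mem_setOf_eq, hPc, Finset.coe_filter, Finset.mem_univ, true_and]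
    rw [hwt lam, ← hcastc]
    exact_mod_cast Iff.rfl
  have hsetn : {lam : K | walsh Q lam = -((2 : ℂ) ^ (m - r / 2))} = (Pn : Set K) := by
    ext lam
    simp only [Set.mem_setOf_eq, hPn, Finset.coe_filter, Finset.mem_univ, true_and]
    rw [hwt lam, ← hcastc, ← Int.cast_neg]
    exact_mod_cast Iff.rfl
  refine ⟨⟨s, by omega⟩, fun lam => ⟨((tchi Q lam : ℤ) : ℝ), by rw [hwt lam]; norm_cast⟩, ?_, ?_, ?_⟩
  · rw [hset0, Set.ncard_coe_finset]
    exact hP0card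
  · rw [hsetc, Set.ncard_coe_finset, hPccard, hrs]
  · rw [hsetn, Set.ncard_coe_finset, hPncard, hrs]
end

section
/- Let Q be a ℤ/4ℤ-valued quadratic form on K with associated symmetric bilinear form B. Then Q has full rank m (equivalently, rad(B) = {0}) if and only if Q is generalized bent, i.e., |χ_Q(λ)|² = 2^m for all λ ∈ K. -/
open Finset

noncomputable def e4 (a : ZMod 4) : ℂ := Complex.I ^ a.val
noncomputable def e2 (a : ZMod 2) : ℂ := (-1 : ℂ) ^ a.val

lemma I_pow_mod (n : ℕ) : Complex.I ^ (n % 4) = Complex.I ^ n := by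
  conv_rhs => rw [← Nat.div_add_mod n 4]
  rw [pow_add, pow_mul, Complex.I_pow_four, one_pow, one_mul]

lemma e4_add (a b : ZMod 4) : e4 (a + b) = e4 a * e4 b := by
  unfold e4
  rw [ZMod.val_add, I_pow_mod, pow_add]

lemma e4_zero : e4 0 = 1 := rfl

lemma e4_ne_zero (a : ZMod 4) : e4 a ≠ 0 := pow_ne_zero _ Complex.I_ne_zero

lemma e2_add (a b : ZMod 2) : e2 (a + b) = e2 a * e2 b := by
  unfold e2
  rw [ZMod.val_add, ← pow_add, ← neg_one_pow_eq_pow_mod_two]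

lemma e2_sq (a : ZMod 2) : e2 a * e2 a = 1 := by
  unfold e2
  rw [← pow_add, ← two_mul, pow_mul, neg_one_sq, one_pow]

lemma e2_zero : e2 0 = 1 := rfl

lemma conj_e4 (a : ZMod 4) : (starRingEnd ℂ) (e4 a) = e4 (-a) := by
  have h1 : e4 a * (starRingEnd ℂ) (e4 a) = 1 := by
    rw [Complex.mul_conj]
    unfold e4
    rw [map_pow, Complex.normSq_I, one_pow, Complex.ofReal_one]
  have h2 : e4 a * e4 (-a) = 1 := by rw [← e4_add, add_neg_cancel, e4_zero]
  exact mul_left_cancel₀ (e4_ne_zero a) (h1.trans h2.symm)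

lemma conj_e2 (a : ZMod 2) : (starRingEnd ℂ) (e2 a) = e2 a := by
  unfold e2; rw [map_pow, map_neg, map_one]

lemma e4_two_iota (e : ZMod 2) : e4 (2 * iota e) = e2 e := by
  fin_cases e
  · show e4 (2 * iota 0) = e2 0
    norm_num [e4, e2, iota]
  · show e4 (2 * iota 1) = e2 1
    have h1 : (2 * iota 1 : ZMod 4) = 2 := by decide
    have h2 : ((2 : ZMod 4)).val = 2 := rfl
    have h3 : ((1 : ZMod 2)).val = 1 := rfl
    norm_num [e4, e2, h1, h2, h3, Complex.I_sq]

section main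

variable {m : ℕ} {K : Type} [Field K] [Fintype K] [Algebra (ZMod 2) K]

open Classical in
lemma key_identity (hcard : Fintype.card K = 2 ^ m)
    (Q : K → ZMod 4) (B : K → K → ZMod 2)
    (hBsymm : ∀ x y : K, B x y = B y x)
    (hBadd : ∀ x x' y : K, B (x + x') y = B x y + B x' y)
    (hQB : ∀ x y : K, Q (x + y) = Q x + Q y + 2 * iota (B x y)) (lam : K) :
    walsh Q lam * (starRingEnd ℂ) (walsh Q lam)
      = (2^m : ℂ) * ∑ z ∈ univ.filter (fun z : K => ∀ y, B z y = 0),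
          e4 (Q z) * e2 (Algebra.trace (ZMod 2) K (lam * z)) := by
  set tr : K → ZMod 2 := fun x => Algebra.trace (ZMod 2) K x with htr
  have hwalsh : walsh Q lam = ∑ x : K, e4 (Q x) * e2 (tr (lam * x)) := rfl
  have hconj : (starRingEnd ℂ) (walsh Q lam)
      = ∑ y : K, e4 (-(Q y)) * e2 (tr (lam * y)) := by
    rw [hwalsh, map_sum]
    refine Finset.sum_congr rfl fun y _ => ?_
    rw [map_mul, conj_e4, conj_e2]
  -- character sum lemma
  have hchar : ∀ z : K, (∑ y : K, e2 (B y z))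
      = if (∀ y, B z y = 0) then (2^m : ℂ) else 0 := by
    intro z
    by_cases hz : ∀ y, B z y = 0
    · rw [if_pos hz]
      have : ∀ y : K, e2 (B y z) = 1 := by
        intro y; rw [hBsymm, hz y]; exact e2_zero
      simp only [this, Finset.sum_const, Finset.card_univ, hcard, nsmul_eq_mul,
        mul_one, Nat.cast_pow, Nat.cast_ofNat]
    · rw [if_neg hz]
      push_neg at hz
      obtain ⟨y0, hy0⟩ := hz
      have hy1 : B z y0 = 1 := by
        rcases (show ∀ a : ZMod 2, a = 0 ∨ a = 1 by decide) (B z y0) with h | h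
        · exact absurd h hy0
        · exact h
      have hS : (∑ y : K, e2 (B y z)) = -(∑ y : K, e2 (B y z)) := by
        conv_lhs => rw [← Equiv.sum_comp (Equiv.addRight y0) (fun y => e2 (B y z))]
        rw [← Finset.sum_neg_distrib]
        refine Finset.sum_congr rfl fun y _ => ?_
        have : B (y + y0) z = B y z + 1 := by
          rw [hBadd, hBsymm y0 z, hy1]
        simp only [Equiv.coe_addRight, this, e2_add]
        have : e2 1 = -1 := by norm_num [e2, show ((1 : ZMod 2)).val = 1 from rfl]
        rw [this]; ring
      linear_combination hS / 2
  calc walsh Q lam * (starRingEnd ℂ) (walsh Q lam)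
      = ∑ x : K, ∑ y : K, (e4 (Q x) * e2 (tr (lam * x))) *
          (e4 (-(Q y)) * e2 (tr (lam * y))) := by
        rw [hconj, hwalsh, Finset.sum_mul_sum]
    _ = ∑ y : K, ∑ x : K, (e4 (Q x) * e2 (tr (lam * x))) *
          (e4 (-(Q y)) * e2 (tr (lam * y))) := Finset.sum_comm
    _ = ∑ y : K, ∑ z : K, e2 (B y z) * (e4 (Q z) * e2 (tr (lam * z))) := by
        refine Finset.sum_congr rfl fun y _ => ?_
        rw [← Equiv.sum_comp (Equiv.addLeft y)
          (fun x => (e4 (Q x) * e2 (tr (lam * x))) * (e4 (-(Q y)) * e2 (tr (lam * y))))]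
        refine Finset.sum_congr rfl fun z _ => ?_
        have h1 : Q (y + z) = Q y + Q z + 2 * iota (B y z) := hQB y z
        have h2 : tr (lam * (y + z)) = tr (lam * y) + tr (lam * z) := by
          rw [mul_add, htr]; exact map_add _ _ _
        have c1 : e4 (Q y) * e4 (-(Q y)) = 1 := by
          rw [← e4_add, add_neg_cancel, e4_zero]
        have c2 := e2_sq (tr (lam * y))
        simp only [Equiv.coe_addLeft, h1, h2, e4_add, e2_add, e4_two_iota]
        calc (e4 (Q y) * e4 (Q z) * e2 (B y z) * (e2 (tr (lam * y)) * e2 (tr (lam * z)))) *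
              (e4 (-(Q y)) * e2 (tr (lam * y)))
            = (e4 (Q y) * e4 (-(Q y))) * (e2 (tr (lam * y)) * e2 (tr (lam * y))) *
              (e2 (B y z) * (e4 (Q z) * e2 (tr (lam * z)))) := by ring
          _ = e2 (B y z) * (e4 (Q z) * e2 (tr (lam * z))) := by
              rw [c1, c2, one_mul, one_mul]
    _ = ∑ z : K, (∑ y : K, e2 (B y z)) * (e4 (Q z) * e2 (tr (lam * z))) := by
        rw [Finset.sum_comm]
        exact Finset.sum_congr rfl fun z _ => (Finset.sum_mul _ _ _).symm
    _ = ∑ z : K, (if (∀ y, B z y = 0) then (2^m : ℂ) else 0) *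
          (e4 (Q z) * e2 (tr (lam * z))) := by
        refine Finset.sum_congr rfl fun z _ => ?_
        rw [hchar z]
    _ = (2^m : ℂ) * ∑ z ∈ univ.filter (fun z : K => ∀ y, B z y = 0),
          e4 (Q z) * e2 (tr (lam * z)) := by
        rw [Finset.mul_sum, Finset.sum_filter]
        refine Finset.sum_congr rfl fun z _ => ?_
        by_cases hz : ∀ y, B z y = 0
        · rw [if_pos hz, if_pos hz]
        · rw [if_neg hz, if_neg hz, zero_mul]

end main

/-- A `ℤ/4ℤ`-valued quadratic form `Q` on `K = 𝔽_{2^m}` has full rank `m`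
(equivalently, its radical is trivial) if and only if `Q` is generalized bent,
i.e. `|χ_Q(λ)|² = 2^m` for all `λ ∈ K`. -/
theorem stmt2 (m : ℕ) (hm : 1 ≤ m) (K : Type) [Field K] [Fintype K]
    [Algebra (ZMod 2) K] (hcard : Fintype.card K = 2 ^ m)
    (Q : K → ZMod 4) (B : K → K → ZMod 2)
    (hQ0 : Q 0 = 0)
    (hBsymm : ∀ x y : K, B x y = B y x)
    (hBadd : ∀ x x' y : K, B (x + x') y = B x y + B x' y)
    (hQB : ∀ x y : K, Q (x + y) = Q x + Q y + 2 * iota (B x y)) :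
    radB B hBadd = ⊥ ↔ (∀ lam : K, ‖walsh Q lam‖ ^ 2 = 2 ^ m) := by
  classical
  have hkey := key_identity hcard Q B hBsymm hBadd hQB
  have h2m : ((2:ℂ)^m) ≠ 0 := pow_ne_zero _ two_ne_zero
  constructor
  · intro hbot lam
    have hS : univ.filter (fun z : K => ∀ y, B z y = 0) = {0} := by
      ext z
      simp only [Finset.mem_filter, Finset.mem_univ, true_and, Finset.mem_singleton]
      constructor
      · intro hz
        have : z ∈ radB B hBadd := hz
        rw [hbot] at this
        simpa using this
      · rintro rfl
        exact (radB B hBadd).zero_mem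
    have := hkey lam
    rw [hS, Finset.sum_singleton, mul_zero, map_zero, hQ0, e4_zero, e2_zero,
      one_mul, mul_one] at this
    rw [Complex.mul_conj] at this
    have h2 : (Complex.normSq (walsh Q lam) : ℝ) = 2 ^ m := by exact_mod_cast this
    rw [Complex.sq_norm, h2]
  · intro hb
    set S := univ.filter (fun z : K => ∀ y, B z y = 0) with hSdef
    have h0 := hkey 0
    have hsum1 : (∑ z ∈ S, e4 (Q z)) = 1 := by
      have hw : walsh Q 0 * (starRingEnd ℂ) (walsh Q 0) = (2:ℂ)^m := by
        rw [Complex.mul_conj]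
        have := hb 0
        rw [Complex.sq_norm] at this
        exact_mod_cast congrArg (Complex.ofReal) this
      rw [hw] at h0
      have h1 := mul_left_cancel₀ h2m ((mul_one ((2:ℂ)^m)).trans h0)
      have h2 : ∀ z ∈ S, e4 (Q z) * e2 (Algebra.trace (ZMod 2) K (0 * z)) = e4 (Q z) := by
        intro z _
        rw [zero_mul, map_zero, e2_zero, mul_one]
      rw [Finset.sum_congr rfl h2] at h1
      exact h1.symm
    -- Q takes values in {0, 2} on the radical
    haveI : CharP K 2 := charP_of_injective_algebraMap' (ZMod 2) 2
    have hQ02 : ∀ z ∈ S, Q z = 0 ∨ Q z = 2 := by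
      intro z hz
      rw [hSdef, Finset.mem_filter] at hz
      have hzz : z + z = 0 := CharTwo.add_self_eq_zero z
      have hQz := hQB z z
      rw [hzz, hQ0, hz.2 z] at hQz
      exact (show ∀ a : ZMod 4, (0 : ZMod 4) = a + a + 2 * iota 0 → a = 0 ∨ a = 2 by
        decide) _ hQz
    set ε : K → ℤ := fun z => if Q z = 0 then 1 else -1 with hεdef
    have hε : ∀ z ∈ S, e4 (Q z) = ((ε z : ℤ) : ℂ) := by
      intro z hz
      rcases hQ02 z hz with h | h
      · have hε1 : ε z = 1 := by rw [hεdef]; simp [h]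
        rw [hε1, h, e4_zero, Int.cast_one]
      · have hε1 : ε z = -1 := by
          rw [hεdef]; simp [h, show (2 : ZMod 4) ≠ 0 by decide]
        rw [hε1, h]
        show Complex.I ^ ((2 : ZMod 4)).val = (((-1 : ℤ)) : ℂ)
        rw [show ((2 : ZMod 4)).val = 2 from rfl, Complex.I_sq]
        norm_num
    have hZ : (∑ z ∈ S, ε z) = 1 := by
      have hc : ((∑ z ∈ S, ε z : ℤ) : ℂ) = ((1 : ℤ) : ℂ) := by
        push_cast
        rw [← Finset.sum_congr rfl hε]
        · exact hsum1
      exact_mod_cast hc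
    have hmod : ((S.card : ℕ) : ZMod 2) = 1 := by
      have hc : ((∑ z ∈ S, ε z : ℤ) : ZMod 2) = ((1 : ℤ) : ZMod 2) := by rw [hZ]
      push_cast at hc
      have hone : ∀ z ∈ S, ((ε z : ℤ) : ZMod 2) = 1 := by
        intro z _
        have h1 : ε z = 1 ∨ ε z = -1 := by
          rw [hεdef]; by_cases hq : Q z = 0 <;> simp [hq]
        rcases h1 with h | h
        · rw [h, Int.cast_one]
        · rw [h, Int.cast_neg, Int.cast_one]; decide
      rw [Finset.sum_congr rfl hone, Finset.sum_const, nsmul_eq_mul, mul_one] at hc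
      exact hc
    have hodd : ¬ (2 ∣ S.card) := by
      intro hdvd
      rw [(ZMod.natCast_eq_zero_iff _ 2).mpr hdvd] at hmod
      exact one_ne_zero hmod.symm
    have hcardS : Nat.card (radB B hBadd) = S.card := by
      rw [Nat.card_congr
        ((Equiv.subtypeEquivRight (fun x => Iff.rfl)) :
          ↥(radB B hBadd) ≃ {z : K // ∀ y, B z y = 0}),
        Nat.card_eq_fintype_card, Fintype.card_subtype]
    have hdvd : S.card ∣ 2 ^ m := by
      have h1 : Nat.card ↥((radB B hBadd).toAddSubgroup) ∣ Nat.card K :=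
        AddSubgroup.card_addSubgroup_dvd_card _
      have h2 : Nat.card ↥((radB B hBadd).toAddSubgroup) = Nat.card ↥(radB B hBadd) :=
        Nat.card_congr (Equiv.subtypeEquivRight (fun x => Iff.rfl))
      rw [h2, hcardS, Nat.card_eq_fintype_card, hcard] at h1
      exact h1
    have hcop : Nat.Coprime S.card 2 :=
      ((Nat.prime_two.coprime_iff_not_dvd).mpr hodd).symm
    have hone : S.card = 1 :=
      Nat.eq_one_of_dvd_one ((hcop.pow_right m) ▸ Nat.dvd_gcd dvd_rfl hdvd)
    have h0S : (0 : K) ∈ S := by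
      rw [hSdef, Finset.mem_filter]
      exact ⟨Finset.mem_univ _, (radB B hBadd).zero_mem⟩
    rw [eq_bot_iff]
    intro x hx
    have hxS : x ∈ S := by
      rw [hSdef, Finset.mem_filter]
      exact ⟨Finset.mem_univ _, hx⟩
    obtain ⟨a, ha⟩ := Finset.card_eq_one.mp hone
    rw [ha, Finset.mem_singleton] at hxS h0S
    rw [Submodule.mem_bot, hxS, ← h0S]
end

section
/- Let n ≥ 1 and let QF be a set of n functions from K to ℤ/4ℤ, none equal to the zero function, such that for any two distinct elements Q, Q' of QF ∪ {0} (where 0 denotes the zero function) the difference Q − Q' is generalized bent. Consider the family C of vectors in the Hermitian inner product space of functions K → ℂ consisting of: (i) for every Q ∈ QF ∪ {0} and every λ ∈ K, the vector c_{Q,λ} whose x-th coordinate (x ∈ K) is 2^{−m/2} · i^{Q(x)} · (−1)^{tr(λx)}; and (ii) for every x ∈ K, the standard basis vector e_x (with 1 in coordinate x and 0 elsewhere). Then all (n+2)·2^m vectors in C are pairwise distinct, each has Euclidean norm 1, and the maximum of |⟨c, c'⟩| over all pairs of distinct vectors c, c' ∈ C equals 2^{−m/2}. Moreover, setting N = (n+2)·2^m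 and D = 2^m, one has 2^{−m/2} = √((2N − D² − D)/((N − D)(D + 1))) (the Levenshtein bound for complex codebooks) if and only if n = 2^m − 1. -/
open Finset

/-- The codebook vector attached to `Q : K → ℤ/4ℤ` and `λ ∈ K`, whose `x`-th
coordinate is `2^{-m/2} · i^{Q(x)} · (−1)^{tr(λx)}`. -/
noncomputable def cbVec {K : Type*} [Field K] [Fintype K] [Algebra (ZMod 2) K]
    (Q : K → ZMod 4) (lam : K) : K → ℂ := fun x =>
  ((Real.sqrt (Fintype.card K) : ℝ)⁻¹ : ℂ) *
    (Complex.I ^ (Q x).val * (-1 : ℂ) ^ (Algebra.trace (ZMod 2) K (lam * x)).val)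

/-- The Hermitian inner product `⟨c, c'⟩ = ∑_x c(x) · conj(c'(x))` on functions `K → ℂ`. -/
noncomputable def herm {K : Type*} [Fintype K] (c c' : K → ℂ) : ℂ :=
  ∑ x : K, c x * star (c' x)

/- ## Auxiliary lemmas -/

lemma I_pow_congr {j k : ℕ} (h : j % 4 = k % 4) : Complex.I ^ j = Complex.I ^ k := by
  conv_lhs => rw [← Nat.mod_add_div j 4]
  conv_rhs => rw [← Nat.mod_add_div k 4]
  simp [pow_add, pow_mul, Complex.I_pow_four, h]

lemma I_pow_val_add (a b : ZMod 4) :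
    Complex.I ^ (a + b).val = Complex.I ^ a.val * Complex.I ^ b.val := by
  rw [← pow_add]
  apply I_pow_congr
  rw [ZMod.val_add]
  simp [Nat.mod_mod_of_dvd]

lemma neg_I_pow_val (b : ZMod 4) : star (Complex.I ^ b.val) = Complex.I ^ (-b).val := by
  rw [star_pow, Complex.star_def, Complex.conj_I]
  have h3 : (-Complex.I) = Complex.I ^ 3 := by
    rw [pow_succ, Complex.I_sq]; ring
  rw [h3, ← pow_mul]
  apply I_pow_congr
  revert b; decide

lemma neg_one_pow_val_add (a b : ZMod 2) :
    ((-1 : ℂ)) ^ (a + b).val = (-1 : ℂ) ^ a.val * (-1 : ℂ) ^ b.val := by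
  rw [← pow_add]
  have h : ((a + b).val % 2) = (a.val + b.val) % 2 := by
    rw [ZMod.val_add]; simp [Nat.mod_mod_of_dvd]
  conv_lhs => rw [← Nat.mod_add_div (a + b).val 2]
  conv_rhs => rw [← Nat.mod_add_div (a.val + b.val) 2]
  simp [pow_add, pow_mul, neg_one_sq, h]

lemma abs_I_pow (k : ℕ) : ‖Complex.I ^ k‖ = 1 := by
  rw [norm_pow, Complex.norm_I, one_pow]

lemma abs_neg_one_pow' (k : ℕ) : ‖(-1 : ℂ) ^ k‖ = 1 := by
  rw [norm_pow, norm_neg, norm_one, one_pow]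

section Field
variable {K : Type} [Field K] [Fintype K] [Algebra (ZMod 2) K]

lemma charK : CharP K 2 := charP_of_injective_algebraMap (algebraMap (ZMod 2) K).injective 2

omit [Fintype K] in
lemma charTwoEq {a b : K} (h : a + b = 0) : a = b := by
  haveI : CharP K 2 := charP_of_injective_algebraMap (algebraMap (ZMod 2) K).injective 2
  have := eq_neg_of_add_eq_zero_left h
  rwa [CharTwo.neg_eq] at this

lemma char_sum_s3 (mu : K) (hmu : mu ≠ 0) :
    ∑ x : K, ((-1 : ℂ)) ^ (Algebra.trace (ZMod 2) K (mu * x)).val = 0 := by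
  haveI : CharP K 2 := charK
  obtain ⟨z, hz⟩ := Algebra.trace_surjective (ZMod 2) K 1
  set y := mu⁻¹ * z with hy'
  have hy : Algebra.trace (ZMod 2) K (mu * y) = 1 := by
    rw [hy', ← mul_assoc, mul_inv_cancel₀ hmu, one_mul, hz]
  set f : K → ℂ := fun x => ((-1 : ℂ)) ^ (Algebra.trace (ZMod 2) K (mu * x)).val with hf
  have key : ∀ x : K, f (x + y) = - f x := by
    intro x
    simp only [hf]
    rw [mul_add, map_add, neg_one_pow_val_add, hy]
    simp [ZMod.val_one]
  have hsum : (∑ x : K, f (x + y)) = ∑ x : K, f x :=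
    Fintype.sum_equiv (Equiv.addRight y) _ _ (fun x => rfl)
  simp only [key, Finset.sum_neg_distrib] at hsum
  linear_combination (-1/2 : ℂ) * hsum

lemma walsh_zero_eq [DecidableEq K] (mu : K) :
    walsh (0 : K → ZMod 4) mu = if mu = 0 then (Fintype.card K : ℂ) else 0 := by
  unfold walsh
  simp only [Pi.zero_apply, ZMod.val_zero, pow_zero, one_mul]
  split_ifs with h
  · subst h
    simp [ZMod.val_zero]
  · exact char_sum_s3 mu h

lemma herm_cbVec (Q Q' : K → ZMod 4) (lam lam' : K) :
    herm (cbVec Q lam) (cbVec Q' lam') =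
      ((Fintype.card K : ℂ))⁻¹ * walsh (Q - Q') (lam + lam') := by
  unfold herm cbVec walsh
  rw [Finset.mul_sum]
  apply Finset.sum_congr rfl
  intro x _
  have hc : ((Real.sqrt (Fintype.card K))⁻¹ : ℂ) * ((Real.sqrt (Fintype.card K))⁻¹ : ℂ)
      = ((Fintype.card K : ℂ))⁻¹ := by
    have : ((Real.sqrt (Fintype.card K))⁻¹ * (Real.sqrt (Fintype.card K))⁻¹ : ℝ)
        = ((Fintype.card K : ℝ))⁻¹ := by
      rw [← mul_inv, Real.mul_self_sqrt (by positivity)]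
    calc ((Real.sqrt (Fintype.card K))⁻¹ : ℂ) * ((Real.sqrt (Fintype.card K))⁻¹ : ℂ)
        = (((Real.sqrt (Fintype.card K))⁻¹ * (Real.sqrt (Fintype.card K))⁻¹ : ℝ) : ℂ) := by
          push_cast; ring
      _ = ((Fintype.card K : ℂ))⁻¹ := by rw [this]; push_cast; ring
  have e1 : Complex.I ^ ((Q - Q') x).val
      = Complex.I ^ (Q x).val * Complex.I ^ (-(Q' x)).val := by
    rw [← I_pow_val_add]
    congr 1
    simp [sub_eq_add_neg]
  have e2 : ((-1 : ℂ)) ^ (Algebra.trace (ZMod 2) K ((lam + lam') * x)).val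
      = (-1 : ℂ) ^ (Algebra.trace (ZMod 2) K (lam * x)).val *
        (-1 : ℂ) ^ (Algebra.trace (ZMod 2) K (lam' * x)).val := by
    rw [← neg_one_pow_val_add, ← map_add, ← add_mul]
  rw [star_mul', star_mul']
  rw [show star ((((Real.sqrt (Fintype.card K) : ℝ)) : ℂ)⁻¹)
      = ((((Real.sqrt (Fintype.card K) : ℝ)) : ℂ))⁻¹ by
    rw [star_inv₀, Complex.star_def, Complex.conj_ofReal]]
  rw [show star ((-1 : ℂ) ^ (Algebra.trace (ZMod 2) K (lam' * x)).val)
      = (-1 : ℂ) ^ (Algebra.trace (ZMod 2) K (lam' * x)).val by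
    rw [star_pow]; norm_num]
  rw [neg_I_pow_val, e1, e2, ← hc]
  ring

end Field

lemma levenshtein_iff (m n : ℕ) (hm : 1 ≤ m) :
    ((Real.sqrt (2 ^ m))⁻¹ =
        Real.sqrt ((2 * (((n : ℝ) + 2) * 2 ^ m) - ((2 : ℝ) ^ m) ^ 2 - 2 ^ m) /
          ((((n : ℝ) + 2) * 2 ^ m - 2 ^ m) * ((2 : ℝ) ^ m + 1))) ↔
      n = 2 ^ m - 1) := by
  have hD2 : (2:ℝ) ≤ 2 ^ m := by
    calc (2:ℝ) = 2 ^ 1 := by norm_num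
    _ ≤ 2 ^ m := pow_le_pow_right₀ (by norm_num) hm
  set D : ℝ := 2 ^ m with hD
  have hDpos : (0:ℝ) < D := by linarith
  have hden : (0:ℝ) < (((n : ℝ) + 2) * D - D) * (D + 1) := by
    have he : ((n:ℝ) + 2) * D - D = ((n:ℝ) + 1) * D := by ring
    rw [he]; positivity
  have hcast : ((2 ^ m - 1 : ℕ) : ℝ) = D - 1 := by
    rw [Nat.cast_sub Nat.one_le_two_pow]
    push_cast
    rw [hD]
  constructor
  · intro h
    rw [← Real.sqrt_inv] at h
    set Y : ℝ := (2 * (((n : ℝ) + 2) * D) - D ^ 2 - D) / ((((n : ℝ) + 2) * D - D) * (D + 1))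
      with hYdef
    have hY0 : 0 ≤ Y := by
      by_contra hneg
      push_neg at hneg
      have h1 : Real.sqrt Y = 0 := Real.sqrt_eq_zero'.mpr hneg.le
      have h2 : 0 < Real.sqrt D⁻¹ := Real.sqrt_pos.mpr (by positivity)
      rw [h] at h2
      rw [h1] at h2
      exact lt_irrefl 0 h2
    have hDY : D⁻¹ = Y := by
      have := congrArg (fun t => t ^ 2) h
      simpa [Real.sq_sqrt (by positivity : (0:ℝ) ≤ D⁻¹), Real.sq_sqrt hY0,
        Real.sq_sqrt hDpos.le] using this
    have hnum : 2 * (((n : ℝ) + 2) * D) - D ^ 2 - D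
        = D⁻¹ * ((((n : ℝ) + 2) * D - D) * (D + 1)) := by
      rw [hDY, hYdef, div_mul_cancel₀ _ (ne_of_gt hden)]
    have hmul : D * (2 * (((n : ℝ) + 2) * D) - D ^ 2 - D)
        = (((n : ℝ) + 2) * D - D) * (D + 1) := by
      rw [hnum, ← mul_assoc, mul_inv_cancel₀ (ne_of_gt hDpos), one_mul]
    have h3 : ((n : ℝ) - (D - 1)) * (D * (D - 1)) = 0 := by linear_combination hmul
    have h4 : (n : ℝ) - (D - 1) = 0 := by
      rcases mul_eq_zero.mp h3 with h' | h'
      · exact h'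
      · exact absurd h' (ne_of_gt (mul_pos hDpos (by linarith)))
    have h5 : (n : ℝ) = ((2 ^ m - 1 : ℕ) : ℝ) := by rw [hcast]; linarith
    exact_mod_cast h5
  · intro h
    subst h
    rw [hcast]
    have hfrac : (2 * (((D - 1 : ℝ) + 2) * D) - D ^ 2 - D) /
        (((D - 1 + 2) * D - D) * (D + 1)) = D⁻¹ := by
      rw [div_eq_iff]
      · field_simp
        ring
      · have : ((D - 1 : ℝ) + 2) * D - D = D * D := by ring
        rw [this]; positivity
    rw [hfrac, Real.sqrt_inv]

/-- Codebooks from a family of `n` generalized bent functions whose pairwise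
differences (including differences with the zero function) are generalized bent:
the resulting `(n+2)·2^m` vectors are pairwise distinct unit vectors with maximal
inner-product correlation `2^{-m/2}`, and this equals the Levenshtein bound for
complex codebooks iff `n = 2^m − 1`. -/
theorem stmt3 (m n : ℕ) (hm : 1 ≤ m) (hn : 1 ≤ n)
    (K : Type) [Field K] [Fintype K] [DecidableEq K] [Algebra (ZMod 2) K]
    (hcard : Fintype.card K = 2 ^ m)
    (QF : Set (K → ZMod 4)) (hQFcard : QF.ncard = n)
    (h0 : (0 : K → ZMod 4) ∉ QF)
    (hbent : ∀ Q ∈ insert (0 : K → ZMod 4) QF, ∀ Q' ∈ insert (0 : K → ZMod 4) QF,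
      Q ≠ Q' → ∀ lam : K, ‖walsh (Q - Q') lam‖ ^ 2 = 2 ^ m) :
    let C : Set (K → ℂ) :=
      {v | ∃ Q ∈ insert (0 : K → ZMod 4) QF, ∃ lam : K, v = cbVec Q lam} ∪
      {v | ∃ x0 : K, v = fun x => if x = x0 then (1 : ℂ) else 0}
    C.ncard = (n + 2) * 2 ^ m ∧
    (∀ c ∈ C, herm c c = 1) ∧
    (∀ c ∈ C, ∀ c' ∈ C, c ≠ c' →
      ‖herm c c'‖ ≤ (Real.sqrt (2 ^ m))⁻¹) ∧
    (∃ c ∈ C, ∃ c' ∈ C, c ≠ c' ∧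
      ‖herm c c'‖ = (Real.sqrt (2 ^ m))⁻¹) ∧
    ((Real.sqrt (2 ^ m))⁻¹ =
        Real.sqrt ((2 * (((n : ℝ) + 2) * 2 ^ m) - ((2 : ℝ) ^ m) ^ 2 - 2 ^ m) /
          ((((n : ℝ) + 2) * 2 ^ m - 2 ^ m) * ((2 : ℝ) ^ m + 1))) ↔
      n = 2 ^ m - 1) := by
  intro C
  haveI : CharP K 2 := charK
  set S : Set (K → ZMod 4) := insert 0 QF with hSdef
  set e : K → (K → ℂ) := fun x0 => fun x => if x = x0 then (1 : ℂ) else 0 with hedef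
  have hC : C = {v | ∃ Q ∈ S, ∃ lam : K, v = cbVec Q lam} ∪ {v | ∃ x0 : K, v = e x0} := rfl
  have hrk : (Fintype.card K : ℝ) = 2 ^ m := by rw [hcard]; push_cast; ring
  have h2m1 : (1 : ℝ) < 2 ^ m := by
    calc (1 : ℝ) < 2 ^ 1 := by norm_num
    _ ≤ 2 ^ m := pow_le_pow_right₀ (by norm_num) hm
  have h2mpos : (0 : ℝ) < 2 ^ m := by linarith
  have hsq1 : (1 : ℝ) < Real.sqrt (2 ^ m) := by
    have := Real.sqrt_lt_sqrt (by norm_num) h2m1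
    rwa [Real.sqrt_one] at this
  have hsqpos : (0 : ℝ) < Real.sqrt (2 ^ m) := by linarith
  have hblt1 : (Real.sqrt (2 ^ m))⁻¹ < 1 := inv_lt_one_of_one_lt₀ hsq1
  have hbne1 : (Real.sqrt (2 ^ m))⁻¹ ≠ 1 := ne_of_lt hblt1
  have hbpos : (0 : ℝ) < (Real.sqrt (2 ^ m))⁻¹ := by positivity
  -- unit norms and inner products
  have hunit : ∀ (Q : K → ZMod 4) (lam : K), herm (cbVec Q lam) (cbVec Q lam) = 1 := by
    intro Q lam
    rw [herm_cbVec, sub_self, CharTwo.add_self_eq_zero, walsh_zero_eq, if_pos rfl,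
      inv_mul_cancel₀]
    exact_mod_cast Fintype.card_ne_zero
  have horth : ∀ (Q : K → ZMod 4) (lam lam' : K), lam ≠ lam' →
      herm (cbVec Q lam) (cbVec Q lam') = 0 := by
    intro Q lam lam' hne
    rw [herm_cbVec, sub_self, walsh_zero_eq, if_neg, mul_zero]
    intro hz; exact hne (charTwoEq hz)
  have hcross : ∀ Q ∈ S, ∀ Q' ∈ S, Q ≠ Q' → ∀ lam lam' : K,
      ‖herm (cbVec Q lam) (cbVec Q' lam')‖ = (Real.sqrt (2 ^ m))⁻¹ := by
    intro Q hQ Q' hQ' hne lam lam'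
    rw [herm_cbVec, norm_mul, norm_inv, Complex.norm_natCast]
    have hw := hbent Q hQ Q' hQ' hne (lam + lam')
    have habs : ‖walsh (Q - Q') (lam + lam')‖ = Real.sqrt (2 ^ m) := by
      rw [← hw, Real.sqrt_sq (norm_nonneg _)]
    have key : ((2 : ℝ) ^ m)⁻¹ * Real.sqrt (2 ^ m) = (Real.sqrt (2 ^ m))⁻¹ := by
      field_simp
      exact Real.sq_sqrt h2mpos.le
    rw [habs, hrk]
    exact key
  have hcbe : ∀ (Q : K → ZMod 4) (lam x0 : K),
      herm (cbVec Q lam) (e x0) = cbVec Q lam x0 := by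
    intro Q lam x0
    unfold herm
    simp [hedef, apply_ite (star : ℂ → ℂ), mul_ite, Finset.sum_ite_eq']
  have heb : ∀ (x0 : K) (Q : K → ZMod 4) (lam : K),
      herm (e x0) (cbVec Q lam) = star (cbVec Q lam x0) := by
    intro x0 Q lam
    unfold herm
    simp [hedef, ite_mul, Finset.sum_ite_eq]
  have hee : ∀ x0 x1 : K, herm (e x0) (e x1) = if x0 = x1 then 1 else 0 := by
    intro x0 x1
    unfold herm
    rcases eq_or_ne x0 x1 with h | h
    · subst h
      simp [hedef, apply_ite (star : ℂ → ℂ), mul_ite, ite_mul, Finset.sum_ite_eq']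
    · simp [hedef, apply_ite (star : ℂ → ℂ), mul_ite, ite_mul, Finset.sum_ite_eq',
        h, Ne.symm h]
  have habs_cb : ∀ (Q : K → ZMod 4) (lam x : K),
      ‖cbVec Q lam x‖ = (Real.sqrt (2 ^ m))⁻¹ := by
    intro Q lam x
    unfold cbVec
    rw [norm_mul, norm_mul, abs_I_pow, abs_neg_one_pow', mul_one, mul_one,
      norm_inv, Complex.norm_real, Real.norm_eq_abs, abs_of_nonneg (Real.sqrt_nonneg _), hrk]
  -- distinctness
  have hcb_inj : ∀ Q ∈ S, ∀ Q' ∈ S, ∀ lam lam' : K,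
      cbVec Q lam = cbVec Q' lam' → Q = Q' ∧ lam = lam' := by
    intro Q hQ Q' hQ' lam lam' heq
    by_cases hQQ : Q = Q'
    · subst hQQ
      refine ⟨rfl, ?_⟩
      by_contra hll
      have h1 : herm (cbVec Q lam) (cbVec Q lam') = 0 := horth _ _ _ hll
      rw [← heq, hunit] at h1
      exact one_ne_zero h1
    · exfalso
      have h1 := hcross Q hQ Q' hQ' hQQ lam lam'
      rw [← heq, hunit] at h1
      simp only [norm_one] at h1
      exact hbne1 h1.symm
  have hcb_ne_e : ∀ (Q : K → ZMod 4) (lam x0 : K), cbVec Q lam ≠ e x0 := by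
    intro Q lam x0 heq
    have h1 := habs_cb Q lam x0
    rw [congrFun heq x0] at h1
    rw [show (e x0 x0) = 1 by simp [hedef], norm_one] at h1
    exact hbne1 h1.symm
  have he_inj : Function.Injective e := by
    intro x0 x1 heq
    by_contra hne
    have h1 := congrFun heq x0
    simp [hedef, hne] at h1
  -- cardinality
  have hA : {v : K → ℂ | ∃ Q ∈ S, ∃ lam : K, v = cbVec Q lam}
      = (fun p : (K → ZMod 4) × K => cbVec p.1 p.2) '' (S ×ˢ (Set.univ : Set K)) := by
    ext v
    simp only [Set.mem_setOf_eq, Set.mem_image, Set.mem_prod, Set.mem_univ, and_true,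
      Prod.exists]
    constructor
    · rintro ⟨Q, hQ, lam, rfl⟩; exact ⟨Q, lam, hQ, rfl⟩
    · rintro ⟨Q, lam, hQ, rfl⟩; exact ⟨Q, hQ, lam, rfl⟩
  have hB : {v : K → ℂ | ∃ x0 : K, v = e x0} = Set.range e := by
    ext v; simp [eq_comm]
  have hScard : S.ncard = n + 1 := by
    rw [hSdef, Set.ncard_insert_of_notMem h0 (Set.toFinite QF), hQFcard]
  have hprodcard : (S ×ˢ (Set.univ : Set K)).ncard = (n + 1) * 2 ^ m := by
    rw [show (S ×ˢ (Set.univ : Set K)).ncard = Nat.card (↥(S ×ˢ (Set.univ : Set K))) from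
      (Nat.card_coe_set_eq _).symm]
    rw [Nat.card_congr (Equiv.Set.prod S Set.univ), Nat.card_prod,
      Nat.card_coe_set_eq, Nat.card_coe_set_eq, hScard, Set.ncard_univ,
      Nat.card_eq_fintype_card, hcard]
  have hinjOn : Set.InjOn (fun p : (K → ZMod 4) × K => cbVec p.1 p.2)
      (S ×ˢ (Set.univ : Set K)) := by
    rintro ⟨Q, lam⟩ ⟨hQ, -⟩ ⟨Q', lam'⟩ ⟨hQ', -⟩ h
    obtain ⟨h1, h2⟩ := hcb_inj Q hQ Q' hQ' lam lam' h
    exact Prod.ext h1 h2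
  have hAcard : {v : K → ℂ | ∃ Q ∈ S, ∃ lam : K, v = cbVec Q lam}.ncard
      = (n + 1) * 2 ^ m := by
    rw [hA, Set.ncard_image_of_injOn hinjOn, hprodcard]
  have hBcard : {v : K → ℂ | ∃ x0 : K, v = e x0}.ncard = 2 ^ m := by
    rw [hB, ← Nat.card_coe_set_eq, Nat.card_range_of_injective he_inj,
      Nat.card_eq_fintype_card, hcard]
  have hAfin : {v : K → ℂ | ∃ Q ∈ S, ∃ lam : K, v = cbVec Q lam}.Finite := by
    rw [hA]; exact Set.Finite.image _ (Set.toFinite _)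
  have hBfin : {v : K → ℂ | ∃ x0 : K, v = e x0}.Finite := by
    rw [hB]; exact Set.finite_range e
  have hdisj : Disjoint {v : K → ℂ | ∃ Q ∈ S, ∃ lam : K, v = cbVec Q lam}
      {v : K → ℂ | ∃ x0 : K, v = e x0} := by
    rw [Set.disjoint_left]
    rintro v ⟨Q, hQ, lam, rfl⟩ ⟨x0, hx0⟩
    exact hcb_ne_e Q lam x0 hx0
  refine ⟨?_, ?_, ?_, ?_, levenshtein_iff m n hm⟩
  · rw [hC, Set.ncard_union_eq hdisj hAfin hBfin, hAcard, hBcard]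
    ring
  · intro c hc
    rw [hC] at hc
    rcases hc with ⟨Q, hQ, lam, rfl⟩ | ⟨x0, rfl⟩
    · exact hunit Q lam
    · rw [hee, if_pos rfl]
  · intro c hc c' hc' hne
    rw [hC] at hc hc'
    rcases hc with ⟨Q, hQ, lam, rfl⟩ | ⟨x0, rfl⟩ <;>
      rcases hc' with ⟨Q', hQ', lam', rfl⟩ | ⟨x1, rfl⟩
    · by_cases hQQ : Q = Q'
      · subst hQQ
        by_cases hll : lam = lam'
        · exact absurd (by rw [hll]) hne
        · rw [horth _ _ _ hll, norm_zero]
          exact hbpos.le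
      · exact le_of_eq (hcross Q hQ Q' hQ' hQQ lam lam')
    · rw [hcbe, habs_cb]
    · rw [heb, Complex.star_def, Complex.norm_conj, habs_cb]
    · by_cases hx : x0 = x1
      · exact absurd (by rw [hx]) hne
      · rw [hee, if_neg hx, norm_zero]
        exact hbpos.le
  · refine ⟨cbVec 0 0, ?_, e 0, ?_, hcb_ne_e 0 0 0, ?_⟩
    · rw [hC]
      exact Or.inl ⟨0, Set.mem_insert _ _, 0, rfl⟩
    · rw [hC]
      exact Or.inr ⟨0, rfl⟩
    · rw [hcbe, habs_cb]
end

section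
/- For every a ∈ F \ {0} and all x, y ∈ F, writing x ⊕ y := (x + y)^{2^m}, one has f_a(x ⊕ y) − f_a(x) − f_a(y) = 2·Tr( y·( a²x + ∑_{j=1}^{l−1} γ_j a·( T_j(γ_j a x) + γ_j a x ) ) ), where the expression inside Tr is computed with the ring operations of R. -/
open Polynomial Finset

/-- The Galois ring `GR(4,m)` presented as a quotient of `(ℤ/4ℤ)[X]`. -/
noncomputable abbrev GR4 (f : Polynomial (ZMod 4)) : Type :=
  Polynomial (ZMod 4) ⧸ Ideal.span {f}

/-- `Q_j(y) = Tr(∑_{i=1}^{(f_j−1)/2} y^{2^{i e_j}+1})`, where `f_j = m / e_j`. -/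
noncomputable def Qform {R : Type*} [CommRing R] (Tr : R → ZMod 4) (m ej : ℕ) (y : R) :
    ZMod 4 :=
  Tr (∑ i ∈ Finset.Icc 1 ((m / ej - 1) / 2), y ^ (2 ^ (i * ej) + 1))

/-- `f_a(x) = Tr(ax) + 2 ∑_{j=1}^{l−1} Q_j(γ_j a x)`. -/
noncomputable def faFn {R : Type*} [CommRing R] (Tr : R → ZMod 4) (m l : ℕ)
    (e : ℕ → ℕ) (γ : ℕ → R) (a x : R) : ZMod 4 :=
  Tr (a * x) + 2 * ∑ j ∈ Finset.Icc 1 (l - 1), Qform Tr m (e j) (γ j * a * x)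

/-- `T_j(w) = ∑_{i=0}^{f_j−1} w^{2^{i e_j}}`, where `f_j = m / e_j`. -/
noncomputable def Tform {R : Type*} [CommRing R] (m ej : ℕ) (w : R) : R :=
  ∑ i ∈ Finset.range (m / ej), w ^ (2 ^ (i * ej))

private lemma sq3 {R : Type*} [CommRing R] (h4 : (4:R) = 0) (A B W : R) :
    (A + B + 2*W)^2 = A^2 + B^2 + 2*(A*B) := by
  linear_combination (W^2 + A*W + B*W) * h4

private lemma pow2exp {R : Type*} [CommRing R] (h4 : (4:R) = 0) (A B : R) (k : ℕ) :
    (A + B)^(2^(k+1)) = A^(2^(k+1)) + B^(2^(k+1)) + 2*((A*B)^(2^k)) := by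
  induction k with
  | zero => norm_num; ring
  | succ k ih =>
    have h2 : (2:ℕ)^(k+1+1) = 2^(k+1) * 2 := pow_succ 2 (k+1)
    rw [h2, pow_mul, pow_mul, pow_mul, ih, sq3 h4, mul_pow]

private lemma pow2exp3 {R : Type*} [CommRing R] (h4 : (4:R) = 0) (A B W : R) (k : ℕ) :
    ∃ d : R, (A + B + 2*W)^(2^(k+1)) = A^(2^(k+1)) + B^(2^(k+1)) + 2*d := by
  induction k with
  | zero =>
    exact ⟨A*B + 2*(A*W + B*W + W^2), by norm_num; ring⟩
  | succ k ih =>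
    obtain ⟨d, hd⟩ := ih
    refine ⟨A^(2^(k+1)) * B^(2^(k+1)), ?_⟩
    have h2 : (2:ℕ)^(k+1+1) = 2^(k+1) * 2 := pow_succ 2 (k+1)
    rw [h2, pow_mul, pow_mul, pow_mul, hd, sq3 h4]

private lemma sum_Icc_one {M : Type*} [AddCommMonoid M] (G : ℕ → M) (n : ℕ) :
    ∑ i ∈ Finset.range (n+1), G i = G 0 + ∑ i ∈ Finset.Icc 1 n, G i := by
  induction n with
  | zero => simp
  | succ n ih =>
    rw [Finset.sum_range_succ, ih, Finset.sum_Icc_succ_top (by omega : 1 ≤ n+1), add_assoc]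

private lemma sum_Icc_reflect {M : Type*} [AddCommMonoid M] (G : ℕ → M) (h fj : ℕ)
    (hfj : fj = 2*h+1) :
    ∑ i ∈ Finset.Icc 1 h, G (fj - i) = ∑ i ∈ Finset.Icc (h+1) (fj-1), G i := by
  refine Finset.sum_bij' (fun i _ => fj - i) (fun i _ => fj - i) ?_ ?_ ?_ ?_ ?_
  · intro a ha; simp only [Finset.mem_Icc] at ha ⊢; omega
  · intro a ha; simp only [Finset.mem_Icc] at ha ⊢; omega
  · intro a ha; simp only [Finset.mem_Icc] at ha; omega
  · intro a ha; simp only [Finset.mem_Icc] at ha; omega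
  · intro a ha; rfl

private lemma sum_Icc_join {M : Type*} [AddCommMonoid M] (G : ℕ → M) (h fj : ℕ)
    (hfj : fj = 2*h+1) :
    (∑ i ∈ Finset.Icc 1 h, G i) + ∑ i ∈ Finset.Icc (h+1) (fj-1), G i
      = ∑ i ∈ Finset.Icc 1 (fj-1), G i := by
  have key : ∀ a b : ℕ, Finset.Icc (a+1) b = Finset.Ioc a b := by
    intro a b; ext x; simp only [Finset.mem_Icc, Finset.mem_Ioc]; omega
  rw [show (1:ℕ) = 0 + 1 from rfl, key 0 h, key h (fj-1), key 0 (fj-1)]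
  exact Finset.sum_Ioc_consecutive G (by omega) (by omega)

set_option maxHeartbeats 1000000

/-- Lemma 4 of the paper: the symplectic form of `f_a`. For `a ∈ F \ {0}` and
`x, y ∈ F`, with `x ⊕ y := (x+y)^{2^m}`,
`f_a(x ⊕ y) − f_a(x) − f_a(y)
  = 2·Tr(y·(a²x + ∑_{j=1}^{l−1} γ_j a (T_j(γ_j a x) + γ_j a x)))`. -/
theorem stmt4 (m l : ℕ) (hm : 1 ≤ m) (hl : 1 ≤ l)
    (f : Polynomial (ZMod 4)) (hmon : f.Monic) (hdeg : f.natDegree = m)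
    (hirr : Irreducible (f.map (ZMod.castHom (show (2:ℕ) ∣ 4 by norm_num) (ZMod 2))))
    (σ : GR4 f ≃+* GR4 f) (hσ : ∀ z : GR4 f, ∃ w : GR4 f, σ z - z ^ 2 = 2 * w)
    (Tr : GR4 f → ZMod 4)
    (hTr : ∀ z : GR4 f,
      algebraMap (ZMod 4) (GR4 f) (Tr z) = ∑ i ∈ Finset.range m, (⇑σ)^[i] z)
    (e : ℕ → ℕ) (he0 : e 0 = 1) (hel : e l = m)
    (he01 : e 0 ≤ e 1) (hemono : ∀ j, 1 ≤ j → j + 1 ≤ l → e j < e (j + 1))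
    (hediv : ∀ j, j < l → e j ∣ e (j + 1))
    (hodd : ∀ j, 1 ≤ j → j ≤ l - 1 → Odd (m / e j))
    (γ : ℕ → GR4 f) (hγ : ∀ j, 1 ≤ j → j ≤ l - 1 → γ j ^ 2 ^ e j = γ j)
    (hγsum : ∀ t, 1 ≤ t → t ≤ l - 1 →
      ¬ ∃ w : GR4 f, (1 : GR4 f) + ∑ j ∈ Finset.Icc 1 t, γ j ^ 2 = 2 * w)
    (a x y : GR4 f) (haF : a ^ 2 ^ m = a) (ha0 : a ≠ 0)
    (hxF : x ^ 2 ^ m = x) (hyF : y ^ 2 ^ m = y) :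
    faFn Tr m l e γ a ((x + y) ^ 2 ^ m) - faFn Tr m l e γ a x - faFn Tr m l e γ a y
      = 2 * Tr (y * (a ^ 2 * x + ∑ j ∈ Finset.Icc 1 (l - 1),
          γ j * a * (Tform m (e j) (γ j * a * x) + γ j * a * x))) := by
  set ι := algebraMap (ZMod 4) (GR4 f) with hιdef
  -- basic ring facts
  have h4 : (4 : GR4 f) = 0 := by
    have h := map_ofNat ι 4
    rw [show ((4 : ZMod 4)) = 0 from by decide, map_zero] at h
    exact h.symm
  have h4' : (4 : ZMod 4) = 0 := by decide
  have hneg : ∀ s : ZMod 4, -(2*s) = 2*s := by decide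
  have hinj : Function.Injective ι := by
    rw [injective_iff_map_eq_zero]
    intro r hr
    by_contra hr0
    have hmk : ι r = Ideal.Quotient.mk (Ideal.span {f}) (Polynomial.C r) := by
      rw [hιdef, IsScalarTower.algebraMap_apply (ZMod 4) (Polynomial (ZMod 4)) (GR4 f),
        Ideal.Quotient.algebraMap_eq, Polynomial.algebraMap_eq]
    rw [hmk, Ideal.Quotient.eq_zero_iff_mem, Ideal.mem_span_singleton] at hr
    obtain ⟨q, hq⟩ := hr
    have hq0 : q ≠ 0 := by
      rintro rfl
      rw [mul_zero] at hq
      exact hr0 (Polynomial.C_eq_zero.mp hq)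
    have hdC : (Polynomial.C r).degree = 0 := Polynomial.degree_C hr0
    have hmul : (Polynomial.C r).degree = q.degree + f.degree := by
      rw [hq, mul_comm]; exact hmon.degree_mul
    haveI : Nontrivial (ZMod 4) := ⟨⟨0, 1, by decide⟩⟩
    rw [hdC, Polynomial.degree_eq_natDegree hq0, Polynomial.degree_eq_natDegree hmon.ne_zero,
      hdeg] at hmul
    have : (0 : ℕ) = q.natDegree + m := by exact_mod_cast hmul
    omega
  -- (A) : Frobenius-type congruence for all elements
  have hA : ∀ z : GR4 f, (2 : GR4 f) ∣ z ^ 2 ^ m - z := by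
    set φ := ZMod.castHom (show (2:ℕ) ∣ 4 by norm_num) (ZMod 2) with hφdef
    set fb := f.map φ with hfbdef
    haveI : Fact (Irreducible fb) := ⟨hirr⟩
    have hfbm : fb.Monic := hmon.map φ
    have hπ0 : ∀ p ∈ Ideal.span {f}, ((AdjoinRoot.mk fb).comp (Polynomial.mapRingHom φ)) p = 0 := by
      intro p hp
      obtain ⟨t, ht⟩ := (Ideal.mem_span_singleton).mp hp
      subst ht
      simp only [RingHom.comp_apply, Polynomial.coe_mapRingHom, Polynomial.map_mul, map_mul,
        ← hfbdef, AdjoinRoot.mk_self, zero_mul]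
    set π : GR4 f →+* AdjoinRoot fb :=
      Ideal.Quotient.lift (Ideal.span {f}) ((AdjoinRoot.mk fb).comp (Polynomial.mapRingHom φ)) hπ0
      with hπdef
    set pb : PowerBasis (ZMod 2) (AdjoinRoot fb) := AdjoinRoot.powerBasis' hfbm with hpbdef
    haveI : Fintype (AdjoinRoot fb) := Module.fintypeOfFintype pb.basis
    have hcard : Fintype.card (AdjoinRoot fb) = 2 ^ m := by
      rw [Module.card_fintype pb.basis]
      have hdim : pb.dim = m := by
        rw [hpbdef, AdjoinRoot.powerBasis'_dim, hfbdef, hmon.natDegree_map, hdeg]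
      simp [hdim, ZMod.card]
    have hker : ∀ z : GR4 f, π z = 0 → (2 : GR4 f) ∣ z := by
      intro z hz
      obtain ⟨p, rfl⟩ := Ideal.Quotient.mk_surjective z
      rw [hπdef, Ideal.Quotient.lift_mk, RingHom.comp_apply, Polynomial.coe_mapRingHom] at hz
      have hdd : fb ∣ p.map φ := AdjoinRoot.mk_eq_zero.mp hz
      obtain ⟨qb, hqb⟩ := hdd
      have hφsurj : Function.Surjective φ := by decide
      obtain ⟨qq, hqq⟩ := Polynomial.map_surjective φ hφsurj qb
      have hzero : (p - f * qq).map φ = 0 := by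
        rw [Polynomial.map_sub, Polynomial.map_mul, hqq, ← hfbdef, ← hqb]
        ring
      have h2dvd : (Polynomial.C (2 : ZMod 4)) ∣ (p - f * qq) := by
        rw [Polynomial.C_dvd_iff_dvd_coeff]
        intro i
        have hco : φ ((p - f*qq).coeff i) = 0 := by
          rw [← Polynomial.coeff_map, hzero, Polynomial.coeff_zero]
        have hcases : ∀ cc : ZMod 4, φ cc = 0 → cc = 0 ∨ cc = 2 := by decide
        rcases hcases _ hco with h0 | h2
        · rw [h0]; exact dvd_zero _
        · rw [h2]
      obtain ⟨r, hr⟩ := h2dvd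
      refine ⟨Ideal.Quotient.mk _ r, ?_⟩
      have hp : p = f * qq + Polynomial.C 2 * r := by linear_combination hr
      rw [hp, map_add, map_mul, map_mul]
      have hf0 : Ideal.Quotient.mk (Ideal.span {f}) f = 0 :=
        Ideal.Quotient.eq_zero_iff_mem.mpr (Ideal.mem_span_singleton_self f)
      rw [hf0, zero_mul, zero_add,
        show (Polynomial.C (2:ZMod 4)) = (2 : Polynomial (ZMod 4)) from map_ofNat _ 2,
        map_ofNat]
    intro z
    apply hker
    rw [map_sub, map_pow, ← hcard, FiniteField.pow_card, sub_self]
  -- iterates of σ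
  have hit_add : ∀ (i : ℕ) (z z' : GR4 f), (⇑σ)^[i] (z + z') = (⇑σ)^[i] z + (⇑σ)^[i] z' := by
    intro i; induction i with
    | zero => intro z z'; simp
    | succ i ih => intro z z'; simp [Function.iterate_succ_apply', ih, map_add]
  have hit_two : ∀ (i : ℕ) (z : GR4 f), (⇑σ)^[i] (2 * z) = 2 * (⇑σ)^[i] z := by
    intro i; induction i with
    | zero => intro z; simp
    | succ i ih => intro z; simp [Function.iterate_succ_apply', ih, map_mul, map_ofNat]
  -- trace facts
  have hTr_add : ∀ z z' : GR4 f, Tr (z + z') = Tr z + Tr z' := by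
    intro z z'
    apply hinj
    rw [map_add, hTr, hTr, hTr, ← Finset.sum_add_distrib]
    exact Finset.sum_congr rfl fun i _ => hit_add i z z'
  have hTr_two : ∀ z : GR4 f, Tr (2 * z) = 2 * Tr z := by
    intro z
    apply hinj
    rw [map_mul, map_ofNat, hTr, hTr, Finset.mul_sum]
    exact Finset.sum_congr rfl fun i _ => hit_two i z
  have hTr_zero : Tr 0 = 0 := by
    have h := hTr_add 0 0
    rw [add_zero] at h
    exact (left_eq_add.mp h)
  have hTr_sum : ∀ (s : Finset ℕ) (g : ℕ → GR4 f), Tr (∑ i ∈ s, g i) = ∑ i ∈ s, Tr (g i) := by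
    intro s g
    induction s using Finset.cons_induction with
    | empty => simpa using hTr_zero
    | cons i s his ih => rw [Finset.sum_cons, Finset.sum_cons, hTr_add, ih]
  have h2tr : ∀ z z' : GR4 f, (2 : GR4 f) ∣ z - z' → 2 * Tr z = 2 * Tr z' := by
    intro z z' ⟨d, hd⟩
    have hz : z = z' + 2 * d := by linear_combination hd
    rw [hz, hTr_add, hTr_two]
    linear_combination Tr d * h4'
  have hσ' : ∀ z : GR4 f, ∃ w : GR4 f, σ z = z ^ 2 + 2 * w := by
    intro z; obtain ⟨w, hw⟩ := hσ z; exact ⟨w, by linear_combination hw⟩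
  have hBiter : ∀ (i : ℕ) (z : GR4 f), ∃ w : GR4 f, (⇑σ)^[i] z = z ^ 2 ^ i + 2 * w := by
    intro i
    induction i with
    | zero => intro z; exact ⟨0, by simp⟩
    | succ i ih =>
      intro z
      obtain ⟨w, hw⟩ := ih z
      obtain ⟨w', hw'⟩ := hσ' (z ^ 2 ^ i)
      refine ⟨w' + σ w, ?_⟩
      have h1 : σ (z ^ 2 ^ i + 2 * w) = (z ^ 2 ^ i) ^ 2 + 2 * w' + 2 * σ w := by
        rw [map_add, map_mul, map_ofNat, hw']
      rw [Function.iterate_succ_apply', hw, h1, ← pow_mul, ← pow_succ]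
      ring
  have hTr_sq : ∀ z : GR4 f, 2 * Tr (z ^ 2) = 2 * Tr z := by
    intro z
    obtain ⟨w, hw⟩ := hσ' z
    obtain ⟨w1, hw1⟩ := hBiter m z
    obtain ⟨d, hd⟩ := hA z
    apply hinj
    rw [map_mul, map_mul, map_ofNat, hTr, hTr, Finset.mul_sum, Finset.mul_sum]
    have hterm : ∀ i : ℕ, 2 * (⇑σ)^[i] (z ^ 2) = 2 * (⇑σ)^[i+1] z := by
      intro i
      have h1 : (⇑σ)^[i+1] z = (⇑σ)^[i] (z ^ 2) + 2 * (⇑σ)^[i] w := by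
        rw [Function.iterate_succ_apply, hw, hit_add, hit_two]
      rw [h1]
      linear_combination (-((⇑σ)^[i] w)) * h4
    rw [Finset.sum_congr rfl (fun i _ => hterm i), ← Finset.mul_sum, ← Finset.mul_sum]
    have e1 := Finset.sum_range_succ' (fun i => (⇑σ)^[i] z) m
    rw [Finset.sum_range_succ (fun i => (⇑σ)^[i] z) m] at e1
    simp only [Function.iterate_zero_apply] at e1
    linear_combination (-2 : GR4 f) * e1 + 2 * hw1 + 2 * hd + (w1 + d) * h4
  have hTr_pow : ∀ (k : ℕ) (z : GR4 f), 2 * Tr (z ^ 2 ^ k) = 2 * Tr z := by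
    intro k; induction k with
    | zero => intro z; norm_num
    | succ k ih =>
      intro z
      have h2 : (2:ℕ)^(k+1) = 2^k * 2 := pow_succ 2 k
      rw [h2, pow_mul, hTr_sq, ih]
  -- divisibility chain
  have hdvd : ∀ j, j ≤ l → e j ∣ m := by
    have key : ∀ k j, j + k = l → e j ∣ e l := by
      intro k; induction k with
      | zero => intro j hj; have : j = l := by omega
                subst this; exact dvd_rfl
      | succ k ih => intro j hj; exact (hediv j (by omega)).trans (ih (j+1) (by omega))
    intro j hj; rw [← hel]; exact key (l - j) j (by omega)
  -- the carry element
  set c : GR4 f := (x * y) ^ 2 ^ (m - 1) with hcdef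
  have hxyexp : (x + y) ^ 2 ^ m = x + y + 2 * c := by
    have := pow2exp h4 x y (m - 1)
    rw [show m - 1 + 1 = m from by omega] at this
    rw [this, hxF, hyF]
  have hc2 : c ^ 2 = x * y := by
    rw [hcdef, ← pow_mul, ← pow_succ, show m - 1 + 1 = m from by omega, mul_pow, hxF, hyF]
  have h2ac : 2 * Tr (a * c) = 2 * Tr (y * (a ^ 2 * x)) := by
    have h1 : (a * c) ^ 2 = y * (a ^ 2 * x) := by rw [mul_pow, hc2]; ring
    rw [← hTr_pow 1 (a * c)]; norm_num [h1]
  -- the per-j identity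
  have hjkey : ∀ j ∈ Finset.Icc 1 (l - 1),
      2 * Qform Tr m (e j) (γ j * a * ((x + y) ^ 2 ^ m))
        = 2 * Qform Tr m (e j) (γ j * a * x) + 2 * Qform Tr m (e j) (γ j * a * y)
          + 2 * Tr (y * (γ j * a * (Tform m (e j) (γ j * a * x) + γ j * a * x))) := by
    intro j hjmem
    rw [Finset.mem_Icc] at hjmem
    obtain ⟨hj1, hj2⟩ := hjmem
    set E := e j with hEdef
    set u := γ j * a * x with hudef
    set v := γ j * a * y with hvdef
    set w' := γ j * a * c with hwdef
    have hEdvd : E ∣ m := hdvd j (by omega)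
    have hE1 : 1 ≤ E := by
      rcases Nat.eq_zero_or_pos E with h0 | h1
      · exfalso
        rw [h0] at hEdvd
        have := Nat.eq_zero_of_zero_dvd hEdvd
        omega
      · exact h1
    set F := m / E with hFdef
    have hFE : F * E = m := Nat.div_mul_cancel hEdvd
    obtain ⟨hh, hhh0⟩ := hodd j hj1 hj2
    have hhh : F = 2 * hh + 1 := by rw [hFdef, hEdef]; exact hhh0
    have hhalf : (F - 1) / 2 = hh := by omega
    have hF1 : 1 ≤ F := by omega
    have hγj : γ j ^ 2 ^ E = γ j := hγ j hj1 hj2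
    have hγpow : ∀ k : ℕ, γ j ^ 2 ^ (k * E) = γ j := by
      intro k
      induction k with
      | zero => simp
      | succ k ih =>
        rw [show (k+1) * E = k * E + E from by ring, pow_add, pow_mul, ih, hγj]
    have hγm : γ j ^ 2 ^ m = γ j := by rw [← hFE]; exact hγpow F
    have hvm : v ^ 2 ^ m = v := by rw [hvdef, mul_pow, mul_pow, hγm, haF, hyF]
    have harg : γ j * a * ((x + y) ^ 2 ^ m) = u + v + 2 * w' := by
      rw [hxyexp, hudef, hvdef, hwdef]; ring
    have hQ : ∀ z : GR4 f, Qform Tr m E z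
        = Tr (∑ i ∈ Finset.Icc 1 hh, z ^ (2 ^ (i * E) + 1)) := by
      intro z
      simp only [Qform]
      rw [← hFdef, hhalf]
    have hcross : ∀ i ∈ Finset.Icc 1 hh, (2 : GR4 f) ∣
        (u + v + 2*w')^(2^(i*E)+1)
          - (u^(2^(i*E)+1) + v^(2^(i*E)+1) + (u^(2^(i*E))*v + v^(2^(i*E))*u)) := by
      intro i hi
      rw [Finset.mem_Icc] at hi
      have hN1 : 1 ≤ i * E := by
        have := Nat.mul_le_mul hi.1 hE1
        omega
      obtain ⟨d, hd⟩ := pow2exp3 h4 u v w' (i*E - 1)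
      rw [show i*E - 1 + 1 = i*E from by omega] at hd
      refine ⟨d*(u+v+2*w') + w'*(u^(2^(i*E)) + v^(2^(i*E))), ?_⟩
      rw [pow_succ, pow_succ, pow_succ, hd]
      ring
    have hcsum : (2 : GR4 f) ∣
        (∑ i ∈ Finset.Icc 1 hh, (u+v+2*w')^(2^(i*E)+1))
        - ∑ i ∈ Finset.Icc 1 hh,
            (u^(2^(i*E)+1) + v^(2^(i*E)+1) + (u^(2^(i*E))*v + v^(2^(i*E))*u)) := by
      rw [← Finset.sum_sub_distrib]
      exact Finset.dvd_sum hcross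
    have hsplit : 2 * Qform Tr m E (u + v + 2*w')
        = 2 * Qform Tr m E u + 2 * Qform Tr m E v
          + 2 * Tr (∑ i ∈ Finset.Icc 1 hh, (u^(2^(i*E))*v + v^(2^(i*E))*u)) := by
      simp only [hQ]
      rw [h2tr _ _ hcsum, Finset.sum_add_distrib, Finset.sum_add_distrib, hTr_add, hTr_add]
      ring
    have hterm : ∀ i ∈ Finset.Icc 1 hh,
        2 * Tr (u^(2^(i*E))*v + v^(2^(i*E))*u)
          = 2 * Tr (u^(2^(i*E))*v) + 2 * Tr (u^(2^((F-i)*E))*v) := by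
      intro i hi
      rw [Finset.mem_Icc] at hi
      rw [hTr_add, mul_add]
      congr 1
      have hp := hTr_pow ((F-i)*E) (v^(2^(i*E))*u)
      have hexp : (v^(2^(i*E))*u)^(2^((F-i)*E)) = u^(2^((F-i)*E)) * v := by
        rw [mul_pow, ← pow_mul, ← pow_add]
        have hiF : i*E + (F-i)*E = m := by
          have h1 : i ≤ F := by omega
          calc i*E + (F-i)*E = (i + (F-i))*E := by ring
            _ = F*E := by rw [Nat.add_sub_cancel' h1]
            _ = m := hFE
        rw [hiF, hvm, mul_comm]
      rw [← hp, hexp]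
    have hcrosskey : 2 * Tr (∑ i ∈ Finset.Icc 1 hh, (u^(2^(i*E))*v + v^(2^(i*E))*u))
        = 2 * Tr (y * (γ j * a * (Tform m E u + u))) := by
      rw [hTr_sum, Finset.mul_sum, Finset.sum_congr rfl hterm, Finset.sum_add_distrib]
      rw [sum_Icc_reflect (fun i => 2 * Tr (u^(2^(i*E))*v)) hh F hhh]
      rw [sum_Icc_join (fun i => 2 * Tr (u^(2^(i*E))*v)) hh F hhh]
      have hone := sum_Icc_one (fun i => 2 * Tr (u^(2^(i*E))*v)) (F-1)
      rw [show F - 1 + 1 = F from by omega] at hone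
      have hrange : ∑ i ∈ Finset.range F, 2 * Tr (u^(2^(i*E))*v)
          = 2 * Tr (Tform m E u * v) := by
        rw [← Finset.mul_sum, ← hTr_sum]
        simp only [Tform]
        rw [← hFdef, Finset.sum_mul]
      have hG0 : 2 * Tr (u^(2^(0*E))*v) = 2 * Tr (u * v) := by norm_num
      have htarget : y * (γ j * a * (Tform m E u + u)) = Tform m E u * v + u * v := by
        rw [hvdef]; ring
      rw [htarget, hTr_add]
      have h1 : (∑ i ∈ Finset.Icc 1 (F-1), 2 * Tr (u^(2^(i*E))*v))
          = 2 * Tr (Tform m E u * v) - 2 * Tr (u*v) := by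
        rw [← hrange, hone, hG0]
        ring
      rw [h1]
      linear_combination (-(Tr (u*v))) * h4'
    rw [harg, hsplit, hcrosskey]
  -- final assembly
  have hTr1 : Tr (a * ((x+y)^2^m)) = Tr (a*x) + Tr (a*y) + 2 * Tr (a*c) := by
    rw [hxyexp, show a*(x+y+2*c) = (a*x + a*y) + 2*(a*c) from by ring, hTr_add, hTr_add,
      hTr_two]
  have hsum : 2 * (∑ j ∈ Finset.Icc 1 (l-1), Qform Tr m (e j) (γ j*a*((x+y)^2^m)))
      = 2 * (∑ j ∈ Finset.Icc 1 (l-1), Qform Tr m (e j) (γ j*a*x))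
        + 2 * (∑ j ∈ Finset.Icc 1 (l-1), Qform Tr m (e j) (γ j*a*y))
        + ∑ j ∈ Finset.Icc 1 (l-1),
            2 * Tr (y * (γ j * a * (Tform m (e j) (γ j*a*x) + γ j*a*x))) := by
    rw [Finset.mul_sum, Finset.mul_sum, Finset.mul_sum, ← Finset.sum_add_distrib,
      ← Finset.sum_add_distrib]
    exact Finset.sum_congr rfl hjkey
  have hRHS : 2 * Tr (y * (a ^ 2 * x + ∑ j ∈ Finset.Icc 1 (l - 1),
        γ j * a * (Tform m (e j) (γ j * a * x) + γ j * a * x)))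
      = 2 * Tr (y * (a^2*x)) + ∑ j ∈ Finset.Icc 1 (l-1),
          2 * Tr (y * (γ j * a * (Tform m (e j) (γ j*a*x) + γ j*a*x))) := by
    rw [mul_add, Finset.mul_sum, hTr_add, hTr_sum, mul_add, Finset.mul_sum]
  simp only [faFn]
  rw [hTr1, hRHS, hsum, ← h2ac]
  ring
end

section
/- For all distinct a, b ∈ F \ {0} and all x, y ∈ F, writing x ⊕ y := (x + y)^{2^m}, one has (f_a − f_b)(x ⊕ y) − (f_a − f_b)(x) − (f_a − f_b)(y) = 2·Tr( y·( (a² + b²)x + ∑_{j=1}^{l−1} [ γ_j a·( T_j(γ_j a x) + γ_j a x ) + γ_j b·( T_j(γ_j b x) + γ_j b x ) ] ) ), where the expression inside Tr is computed with the ring operations of R. -/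
open Polynomial Finset

section S2aux
variable {R : Type*} [CommRing R]

/-- `s2x m w = ∑_{i<m} 2 w^{2^i}`; it equals the image of `2·Tr w` in `R`. -/
def s2x (m : ℕ) (w : R) : R := ∑ i ∈ Finset.range m, 2 * w ^ 2 ^ i

lemma gr_pow_2pow_add (h4 : (2:R) * 2 = 0) (u v : R) : ∀ k, 1 ≤ k →
    (u + v) ^ 2 ^ k = u ^ 2 ^ k + v ^ 2 ^ k + 2 * (u * v) ^ 2 ^ (k - 1) := by
  intro k hk
  induction k with
  | zero => omega
  | succ n ih =>
    rcases Nat.eq_or_lt_of_le hk with h | h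
    · simp only [← h]; norm_num; ring
    · have hn : 1 ≤ n := by omega
      have e1 : ∀ t : R, t ^ 2 ^ (n+1) = (t ^ 2 ^ n) ^ 2 := by
        intro t; rw [← pow_mul, pow_succ]
      rw [e1, ih hn, e1, e1]
      have : (u ^ 2 ^ n + v ^ 2 ^ n + 2 * (u * v) ^ 2 ^ (n - 1)) ^ 2
          = (u ^ 2 ^ n) ^ 2 + (v ^ 2 ^ n) ^ 2 + 2 * (u ^ 2 ^ n * v ^ 2 ^ n)
            + (2*2) * ((u ^ 2 ^ n + v ^ 2 ^ n) * (u*v) ^ 2 ^ (n-1)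
                + ((u*v) ^ 2 ^ (n-1))^2) := by ring
      rw [this, h4]
      rw [show n + 1 - 1 = n from rfl, ← mul_pow]
      ring

lemma gr_add_2mul_pow (h4 : (2:R) * 2 = 0) (t w : R) : ∀ k, 1 ≤ k →
    (t + 2 * w) ^ 2 ^ k = t ^ 2 ^ k := by
  intro k hk
  induction k with
  | zero => omega
  | succ n ih =>
    rcases Nat.eq_or_lt_of_le hk with h | h
    · simp only [← h]; norm_num
      linear_combination (t * w + w ^ 2) * h4
    · have hn : 1 ≤ n := by omega
      have e1 : ∀ s : R, s ^ 2 ^ (n+1) = (s ^ 2 ^ n) ^ 2 := by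
        intro s; rw [← pow_mul, pow_succ]
      rw [e1, ih hn, ← e1]

lemma gr_two_mul_pow_add (h4 : (2:R) * 2 = 0) (u v : R) (i : ℕ) :
    2 * (u + v) ^ 2 ^ i = 2 * u ^ 2 ^ i + 2 * v ^ 2 ^ i := by
  rcases Nat.eq_zero_or_pos i with h | h
  · subst h; norm_num; ring
  · rw [gr_pow_2pow_add h4 u v i h]
    linear_combination (u*v) ^ 2 ^ (i-1) * h4

lemma s2x_add (h4 : (2:R) * 2 = 0) (m : ℕ) (u v : R) :
    s2x m (u + v) = s2x m u + s2x m v := by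
  rw [s2x, s2x, s2x, ← Finset.sum_add_distrib]
  exact Finset.sum_congr rfl fun i _ => gr_two_mul_pow_add h4 u v i

lemma s2x_add_two (h4 : (2:R) * 2 = 0) (m : ℕ) (t w : R) :
    s2x m (t + 2 * w) = s2x m t := by
  refine Finset.sum_congr rfl fun i _ => ?_
  rcases Nat.eq_zero_or_pos i with h | h
  · subst h; norm_num; linear_combination w * h4
  · rw [gr_add_2mul_pow h4 t w i h]

lemma s2x_zero (m : ℕ) : s2x m (0 : R) = 0 := by
  refine Finset.sum_eq_zero fun i _ => ?_
  rw [zero_pow (by positivity), mul_zero]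

lemma s2x_self_add_self (h4 : (2:R) * 2 = 0) (m : ℕ) (w : R) :
    s2x m w + s2x m w = 0 := by
  rw [← s2x_add h4, show w + w = 0 + 2 * w by ring, s2x_add_two h4, s2x_zero]

lemma s2x_neg (h4 : (2:R) * 2 = 0) (m : ℕ) (w : R) : s2x m (-w) = s2x m w := by
  have h0 := s2x_add h4 m w (-w)
  rw [add_neg_cancel, s2x_zero] at h0
  have h1 := s2x_self_add_self h4 m w
  linear_combination -h0 - h1

lemma s2x_sub (h4 : (2:R) * 2 = 0) (m : ℕ) (p q : R) :
    s2x m (p - q) = s2x m p + s2x m q := by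
  rw [sub_eq_add_neg, s2x_add h4, s2x_neg h4]

lemma s2x_sum {ι : Type*} (h4 : (2:R) * 2 = 0) (m : ℕ) (s : Finset ι) (F : ι → R) :
    s2x m (∑ i ∈ s, F i) = ∑ i ∈ s, s2x m (F i) := by
  classical
  induction s using Finset.induction_on with
  | empty => simp [s2x_zero]
  | insert _ _ h ih => rw [Finset.sum_insert h, Finset.sum_insert h, s2x_add h4, ih]

lemma s2x_sq (m : ℕ) (w : R) (hw : w ^ 2 ^ m = w) : s2x m (w ^ 2) = s2x m w := by
  have e1 : ∀ i, (w ^ 2) ^ 2 ^ i = w ^ 2 ^ (i + 1) := by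
    intro i; rw [← pow_mul, ← pow_succ']
  calc s2x m (w ^ 2) = ∑ i ∈ range m, 2 * w ^ 2 ^ (i+1) := by
        refine Finset.sum_congr rfl fun i _ => by rw [e1]
    _ = (∑ i ∈ range (m+1), 2 * w ^ 2 ^ i) - 2 * w ^ 2 ^ 0 := by
        rw [Finset.sum_range_succ' (fun i => 2 * w ^ 2 ^ i) m]; ring
    _ = s2x m w := by
        rw [Finset.sum_range_succ, hw]; simp [s2x]

lemma s2x_pow (m : ℕ) (w : R) (hw : w ^ 2 ^ m = w) (t : ℕ) :
    s2x m (w ^ 2 ^ t) = s2x m w := by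
  induction t with
  | zero => simp
  | succ n ih =>
    have e1 : w ^ 2 ^ (n+1) = (w ^ 2 ^ n) ^ 2 := by rw [← pow_mul, pow_succ]
    have hwn : (w ^ 2 ^ n) ^ 2 ^ m = w ^ 2 ^ n := by
      rw [← pow_mul, mul_comm, pow_mul, hw]
    rw [e1, s2x_sq m _ hwn, ih]

lemma s2x_cross (h4 : (2:R) * 2 = 0) (m k : ℕ) (hk : 1 ≤ k) (u v w : R) :
    s2x m ((u + v + 2 * w) ^ (2 ^ k + 1))
      = (s2x m (u ^ (2 ^ k + 1)) + s2x m (v ^ (2 ^ k + 1)))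
        + (s2x m (u ^ 2 ^ k * v) + s2x m (v ^ 2 ^ k * u)) := by
  have h1 : (u + v + 2 * w) ^ (2 ^ k + 1)
      = (u ^ (2 ^ k + 1) + v ^ (2 ^ k + 1) + u ^ 2 ^ k * v + v ^ 2 ^ k * u)
        + 2 * ((u * v) ^ 2 ^ (k - 1) * (u + v) + w * (u + v) ^ 2 ^ k) := by
    rw [pow_succ, gr_add_2mul_pow h4 (u + v) w k hk, gr_pow_2pow_add h4 u v k hk]
    ring
  rw [h1, s2x_add_two h4, s2x_add h4, s2x_add h4, s2x_add h4]
  ring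

lemma s2x_swap (h4 : (2:R) * 2 = 0) (m e d p q : ℕ) (hm : m = e * (2 * d + 1))
    (hpq : p + q = 2 * d + 1)
    (u v : R) (hu : u ^ 2 ^ m = u) (hv : v ^ 2 ^ m = v) :
    s2x m (v ^ 2 ^ (p * e) * u) = s2x m (u ^ 2 ^ (q * e) * v) := by
  have hst : (v ^ 2 ^ (p * e) * u) ^ 2 ^ m = v ^ 2 ^ (p * e) * u := by
    rw [mul_pow, ← pow_mul, mul_comm (2 ^ (p*e)) (2 ^ m), pow_mul, hv, hu]
  have h := s2x_pow m (v ^ 2 ^ (p * e) * u) hst (q * e)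
  rw [mul_pow, ← pow_mul, ← pow_add] at h
  have hpe : p * e + q * e = m := by rw [← add_mul, hpq, hm]; ring
  rw [hpe, hv, mul_comm] at h
  exact h.symm

lemma s2x_jterm (h4 : (2:R) * 2 = 0) (m e d : ℕ) (he : 1 ≤ e)
    (hm : m = e * (2 * d + 1))
    (u v w : R) (hu : u ^ 2 ^ m = u) (hv : v ^ 2 ^ m = v) :
    s2x m ((∑ i ∈ Icc 1 d, (u + v + 2 * w) ^ (2 ^ (i * e) + 1))
        - (∑ i ∈ Icc 1 d, u ^ (2 ^ (i * e) + 1))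
        - (∑ i ∈ Icc 1 d, v ^ (2 ^ (i * e) + 1)))
      = s2x m (v * ((∑ i ∈ Finset.range (2 * d + 1), u ^ 2 ^ (i * e)) + u)) := by
  have hcanc : ∀ (S : Finset ℕ) (F : ℕ → R),
      (∑ i ∈ S, s2x m (F i)) + (∑ i ∈ S, s2x m (F i)) = 0 := by
    intro S F
    rw [← Finset.sum_add_distrib]
    exact Finset.sum_eq_zero fun i _ => s2x_self_add_self h4 m (F i)
  have hIcc : ∀ F : ℕ → R, ∀ n, ∑ i ∈ Icc 1 n, F i = ∑ i ∈ range n, F (1 + i) := by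
    intro F n
    rw [← Finset.Ico_add_one_right_eq_Icc, Finset.sum_Ico_eq_sum_range]
    simp
  have hterm : ∀ i ∈ Icc 1 d,
      s2x m ((u + v + 2 * w) ^ (2 ^ (i * e) + 1))
        = (s2x m (u ^ (2 ^ (i * e) + 1)) + s2x m (v ^ (2 ^ (i * e) + 1)))
          + (s2x m (u ^ 2 ^ (i * e) * v) + s2x m (v ^ 2 ^ (i * e) * u)) := by
    intro i hi
    exact s2x_cross h4 m (i * e)
      (le_trans he (Nat.le_mul_of_pos_left e (Finset.mem_Icc.mp hi).1)) u v w
  have hL : s2x m ((∑ i ∈ Icc 1 d, (u + v + 2 * w) ^ (2 ^ (i * e) + 1))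
        - (∑ i ∈ Icc 1 d, u ^ (2 ^ (i * e) + 1))
        - (∑ i ∈ Icc 1 d, v ^ (2 ^ (i * e) + 1)))
      = (∑ i ∈ Icc 1 d, s2x m (u ^ 2 ^ (i * e) * v))
        + (∑ i ∈ Icc 1 d, s2x m (v ^ 2 ^ (i * e) * u)) := by
    rw [s2x_sub h4, s2x_sub h4, s2x_sum h4, s2x_sum h4, s2x_sum h4,
      Finset.sum_congr rfl hterm, Finset.sum_add_distrib, Finset.sum_add_distrib,
      Finset.sum_add_distrib]
    linear_combination hcanc (Icc 1 d) (fun i => u ^ (2 ^ (i * e) + 1))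
      + hcanc (Icc 1 d) (fun i => v ^ (2 ^ (i * e) + 1))
  rw [hL]
  have hswap : (∑ i ∈ Icc 1 d, s2x m (v ^ 2 ^ (i * e) * u))
      = ∑ i ∈ range d, s2x m (u ^ 2 ^ ((d + 1 + i) * e) * v) := by
    rw [hIcc]
    rw [← Finset.sum_range_reflect (fun i => s2x m (u ^ 2 ^ ((d + 1 + i) * e) * v)) d]
    refine Finset.sum_congr rfl fun i hi => ?_
    have hid : i < d := Finset.mem_range.mp hi
    have harith : d + 1 + (d - 1 - i) = 2 * d - i := by omega
    rw [harith]
    exact s2x_swap h4 m e d (1 + i) (2 * d - i) hm (by omega) u v hu hv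
  rw [hswap, hIcc]
  have hRHS : v * ((∑ i ∈ Finset.range (2 * d + 1), u ^ 2 ^ (i * e)) + u)
      = (∑ i ∈ Finset.range (2 * d + 1), u ^ 2 ^ (i * e) * v) + u * v := by
    rw [mul_add, Finset.mul_sum, mul_comm v u]
    congr 1
    exact Finset.sum_congr rfl fun i _ => mul_comm _ _
  rw [hRHS, s2x_add h4, s2x_sum h4,
    Finset.sum_range_succ' (fun i => s2x m (u ^ 2 ^ (i * e) * v)) (2 * d)]
  have h00 : s2x m (u ^ 2 ^ (0 * e) * v) = s2x m (u * v) := by norm_num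
  rw [h00]
  have h2d : (∑ i ∈ range (2 * d), s2x m (u ^ 2 ^ ((i + 1) * e) * v))
      = (∑ i ∈ range d, s2x m (u ^ 2 ^ ((1 + i) * e) * v))
        + ∑ i ∈ range d, s2x m (u ^ 2 ^ ((d + 1 + i) * e) * v) := by
    rw [show 2 * d = d + d from by omega,
      Finset.sum_range_add (fun i => s2x m (u ^ 2 ^ ((i + 1) * e) * v)) d d]
    congr 1
    · exact Finset.sum_congr rfl fun i _ => by rw [Nat.add_comm i 1]
    · exact Finset.sum_congr rfl fun i _ => by rw [show d + i + 1 = d + 1 + i from by omega]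
  rw [h2d]
  have h3 := s2x_self_add_self h4 m (u * v)
  linear_combination -h3

end S2aux

set_option maxHeartbeats 2000000 in
/-- Lemma 5 of the paper: the symplectic form of `f_a − f_b`. For distinct
`a, b ∈ F \ {0}` and `x, y ∈ F`, with `x ⊕ y := (x+y)^{2^m}`,
`(f_a−f_b)(x ⊕ y) − (f_a−f_b)(x) − (f_a−f_b)(y)
  = 2·Tr(y·((a²+b²)x + ∑_{j=1}^{l−1} [γ_j a (T_j(γ_j a x) + γ_j a x)
      + γ_j b (T_j(γ_j b x) + γ_j b x)]))`. -/
theorem stmt5 (m l : ℕ) (hm : 1 ≤ m) (hl : 1 ≤ l)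
    (f : Polynomial (ZMod 4)) (hmon : f.Monic) (hdeg : f.natDegree = m)
    (hirr : Irreducible (f.map (ZMod.castHom (show (2:ℕ) ∣ 4 by norm_num) (ZMod 2))))
    (σ : GR4 f ≃+* GR4 f) (hσ : ∀ z : GR4 f, ∃ w : GR4 f, σ z - z ^ 2 = 2 * w)
    (Tr : GR4 f → ZMod 4)
    (hTr : ∀ z : GR4 f,
      algebraMap (ZMod 4) (GR4 f) (Tr z) = ∑ i ∈ Finset.range m, (⇑σ)^[i] z)
    (e : ℕ → ℕ) (he0 : e 0 = 1) (hel : e l = m)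
    (he01 : e 0 ≤ e 1) (hemono : ∀ j, 1 ≤ j → j + 1 ≤ l → e j < e (j + 1))
    (hediv : ∀ j, j < l → e j ∣ e (j + 1))
    (hodd : ∀ j, 1 ≤ j → j ≤ l - 1 → Odd (m / e j))
    (γ : ℕ → GR4 f) (hγ : ∀ j, 1 ≤ j → j ≤ l - 1 → γ j ^ 2 ^ e j = γ j)
    (hγsum : ∀ t, 1 ≤ t → t ≤ l - 1 →
      ¬ ∃ w : GR4 f, (1 : GR4 f) + ∑ j ∈ Finset.Icc 1 t, γ j ^ 2 = 2 * w)
    (a b x y : GR4 f) (haF : a ^ 2 ^ m = a) (ha0 : a ≠ 0)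
    (hbF : b ^ 2 ^ m = b) (hb0 : b ≠ 0) (hab : a ≠ b)
    (hxF : x ^ 2 ^ m = x) (hyF : y ^ 2 ^ m = y) :
    (faFn Tr m l e γ a ((x + y) ^ 2 ^ m) - faFn Tr m l e γ b ((x + y) ^ 2 ^ m))
      - (faFn Tr m l e γ a x - faFn Tr m l e γ b x)
      - (faFn Tr m l e γ a y - faFn Tr m l e γ b y)
      = 2 * Tr (y * ((a ^ 2 + b ^ 2) * x + ∑ j ∈ Finset.Icc 1 (l - 1),
          (γ j * a * (Tform m (e j) (γ j * a * x) + γ j * a * x)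
            + γ j * b * (Tform m (e j) (γ j * b * x) + γ j * b * x)))) := by
  classical
  set φ : ZMod 4 →+* GR4 f := (algebraMap (ZMod 4) (GR4 f)) with hφdef
  -- (2 : GR4 f) ≠ 0
  have h2ne : (2 : GR4 f) ≠ 0 := by
    intro h2
    have hmk : (2 : GR4 f) = Ideal.Quotient.mk (Ideal.span {f}) (2 : Polynomial (ZMod 4)) :=
      (map_ofNat (Ideal.Quotient.mk (Ideal.span {f})) 2).symm
    rw [hmk, Ideal.Quotient.eq_zero_iff_mem, Ideal.mem_span_singleton] at h2
    obtain ⟨g, hg⟩ := h2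
    have h2p : (2 : Polynomial (ZMod 4)) ≠ 0 := by
      intro h0
      have h0' : ((2 : Polynomial (ZMod 4)).coeff 0) = (2 : ZMod 4) := by simp
      rw [h0] at h0'
      simp at h0'
      exact absurd h0'.symm (by decide)
    have hgne : g ≠ 0 := by
      rintro rfl; rw [mul_zero] at hg; exact h2p hg
    have hdeg2 : (2 : Polynomial (ZMod 4)).natDegree = 0 := by
      simp
    rw [hg, hmon.natDegree_mul' hgne, hdeg] at hdeg2
    omega
  -- injectivity of φ
  have hφ2 : φ (2 : ZMod 4) = 2 := map_ofNat φ 2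
  have hinj : Function.Injective φ := by
    rw [injective_iff_map_eq_zero]
    intro k hk
    have h1ne : (1 : GR4 f) ≠ 0 := by
      intro h1
      apply h2ne
      calc (2 : GR4 f) = 2 * 1 := by ring
        _ = 0 := by rw [h1, mul_zero]
    have hcase : ∀ k : ZMod 4, k = 0 ∨ k = 1 ∨ k = 2 ∨ k = 3 := by decide
    rcases hcase k with rfl | rfl | rfl | rfl
    · rfl
    · rw [map_one] at hk; exact absurd hk h1ne
    · rw [hφ2] at hk; exact absurd hk h2ne
    · exfalso
      apply h1ne
      have : φ ((3 : ZMod 4) * 3) = 0 := by rw [map_mul, hk, mul_zero]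
      rw [show (3 : ZMod 4) * 3 = 1 from by decide, map_one] at this
      exact this
  -- char fact
  have h4 : (2 : GR4 f) * 2 = 0 := by
    have h1 : (2 : GR4 f) * 2 = φ ((2 : ZMod 4) * 2) := by rw [map_mul, hφ2]
    rw [h1, show (2 : ZMod 4) * 2 = 0 from by decide, map_zero]
  -- Frobenius iterates
  have hiter : ∀ (w : GR4 f) (i : ℕ), ∃ r, (⇑σ)^[i] w = w ^ 2 ^ i + 2 * r := by
    intro w i
    induction i with
    | zero => exact ⟨0, by simp⟩
    | succ n ih =>
      obtain ⟨r, hr⟩ := ih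
      obtain ⟨t, ht⟩ := hσ (w ^ 2 ^ n)
      refine ⟨t + σ r, ?_⟩
      have hσr : σ (2 * r) = 2 * σ r := by
        rw [map_mul, map_ofNat]
      have hσw : σ (w ^ 2 ^ n) = (w ^ 2 ^ n) ^ 2 + 2 * t := by linear_combination ht
      rw [Function.iterate_succ_apply', hr, map_add, hσr, hσw, ← pow_mul, ← pow_succ]
      ring
  have hSadd : ∀ (i : ℕ) (u v : GR4 f), (⇑σ)^[i] (u + v) = (⇑σ)^[i] u + (⇑σ)^[i] v := by
    intro i
    induction i with
    | zero => intro u v; simp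
    | succ n ih =>
      intro u v
      rw [Function.iterate_succ_apply', Function.iterate_succ_apply',
        Function.iterate_succ_apply', ih, map_add]
  -- bridge
  have hs2 : ∀ w : GR4 f, φ (2 * Tr w) = s2x m w := by
    intro w
    rw [map_mul, hφ2, hTr, Finset.mul_sum]
    refine Finset.sum_congr rfl fun i _ => ?_
    obtain ⟨r, hr⟩ := hiter w i
    rw [hr]
    linear_combination r * h4
  -- trace properties
  have hTr0 : Tr 0 = 0 := by
    apply hinj
    rw [hTr, map_zero]
    exact Finset.sum_eq_zero fun i _ => Function.iterate_fixed (map_zero σ) i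
  have hTradd : ∀ u v : GR4 f, Tr (u + v) = Tr u + Tr v := by
    intro u v
    apply hinj
    rw [map_add, hTr, hTr, hTr, ← Finset.sum_add_distrib]
    exact Finset.sum_congr rfl fun i _ => hSadd i u v
  have hTrsub : ∀ u v : GR4 f, Tr (u - v) = Tr u - Tr v := by
    intro u v
    have h := hTradd (u - v) v
    rw [sub_add_cancel] at h
    linear_combination -h
  have hTr2 : ∀ w : GR4 f, Tr (2 * w) = 2 * Tr w := by
    intro w
    rw [two_mul, hTradd]; ring
  have hTrsum : ∀ (s : Finset ℕ) (F : ℕ → GR4 f),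
      Tr (∑ j ∈ s, F j) = ∑ j ∈ s, Tr (F j) := by
    intro s F
    induction s using Finset.induction_on with
    | empty => simpa using hTr0
    | insert _ _ h ih => rw [Finset.sum_insert h, Finset.sum_insert h, hTradd, ih]
  -- divisibility facts
  have hdvdm : ∀ j, j ≤ l → e j ∣ m := by
    have haux : ∀ k j, j + k = l → e j ∣ e l := by
      intro k
      induction k with
      | zero => intro j hj; rw [show j = l from by omega]
      | succ n ih =>
        intro j hj
        exact dvd_trans (hediv j (by omega)) (ih (j + 1) (by omega))
    intro j hj
    have h := haux (l - j) j (by omega)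
    rwa [hel] at h
  have hpc : ∀ (g : GR4 f) (E n : ℕ), g ^ 2 ^ E = g → g ^ 2 ^ (E * n) = g := by
    intro g E n hg
    induction n with
    | zero => simp
    | succ k ih =>
      rw [Nat.mul_succ, pow_add, pow_mul, ih, hg]
  have hγm : ∀ j, 1 ≤ j → j ≤ l - 1 → γ j ^ 2 ^ m = γ j := by
    intro j hj1 hj2
    obtain ⟨n, hn⟩ := hdvdm j (by omega)
    rw [hn]
    exact hpc (γ j) (e j) n (hγ j hj1 hj2)
  have hd : ∀ j, 1 ≤ j → j ≤ l - 1 → m / e j = 2 * ((m / e j - 1) / 2) + 1 := by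
    intro j hj1 hj2
    obtain ⟨t, ht⟩ := hodd j hj1 hj2
    omega
  have he1 : ∀ j, 1 ≤ j → j ≤ l - 1 → 1 ≤ e j := by
    intro j hj1 hj2
    rcases Nat.eq_zero_or_pos (e j) with h | h
    · exfalso
      have := hdvdm j (by omega)
      rw [h] at this
      have := Nat.eq_zero_of_zero_dvd this
      omega
    · exact h
  have hmj : ∀ j, 1 ≤ j → j ≤ l - 1 →
      m = e j * (2 * ((m / e j - 1) / 2) + 1) := by
    intro j hj1 hj2
    have h := (Nat.mul_div_cancel' (hdvdm j (by omega))).symm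
    rw [hd j hj1 hj2] at h
    exact h
  -- the key decomposition
  set μ : GR4 f := (x * y) ^ 2 ^ (m - 1) with hμdef
  have hX : (x + y) ^ 2 ^ m = x + y + 2 * μ := by
    rw [gr_pow_2pow_add h4 x y m hm, hxF, hyF]
  rw [hX]
  simp only [Tform]
  have key : ∀ c : GR4 f,
      faFn Tr m l e γ c (x + y + 2 * μ) - faFn Tr m l e γ c x - faFn Tr m l e γ c y
        = 2 * Tr (c * μ + ∑ j ∈ Finset.Icc 1 (l - 1),
            ((∑ i ∈ Finset.Icc 1 ((m / e j - 1) / 2),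
                (γ j * c * (x + y + 2 * μ)) ^ (2 ^ (i * e j) + 1))
              - (∑ i ∈ Finset.Icc 1 ((m / e j - 1) / 2),
                (γ j * c * x) ^ (2 ^ (i * e j) + 1))
              - (∑ i ∈ Finset.Icc 1 ((m / e j - 1) / 2),
                (γ j * c * y) ^ (2 ^ (i * e j) + 1)))) := by
    intro c
    have hR : Tr (c * μ + ∑ j ∈ Finset.Icc 1 (l - 1),
            ((∑ i ∈ Finset.Icc 1 ((m / e j - 1) / 2),
                (γ j * c * (x + y + 2 * μ)) ^ (2 ^ (i * e j) + 1))
              - (∑ i ∈ Finset.Icc 1 ((m / e j - 1) / 2),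
                (γ j * c * x) ^ (2 ^ (i * e j) + 1))
              - (∑ i ∈ Finset.Icc 1 ((m / e j - 1) / 2),
                (γ j * c * y) ^ (2 ^ (i * e j) + 1))))
        = Tr (c * μ)
          + ((∑ j ∈ Finset.Icc 1 (l - 1), Tr (∑ i ∈ Finset.Icc 1 ((m / e j - 1) / 2),
                (γ j * c * (x + y + 2 * μ)) ^ (2 ^ (i * e j) + 1)))
            - (∑ j ∈ Finset.Icc 1 (l - 1), Tr (∑ i ∈ Finset.Icc 1 ((m / e j - 1) / 2),
                (γ j * c * x) ^ (2 ^ (i * e j) + 1)))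
            - (∑ j ∈ Finset.Icc 1 (l - 1), Tr (∑ i ∈ Finset.Icc 1 ((m / e j - 1) / 2),
                (γ j * c * y) ^ (2 ^ (i * e j) + 1)))) := by
      rw [hTradd, Finset.sum_sub_distrib, Finset.sum_sub_distrib, hTrsub, hTrsub,
        hTrsum, hTrsum, hTrsum]
    rw [hR]
    simp only [faFn, Qform]
    have h1 : c * (x + y + 2 * μ) = c * x + (c * y + 2 * (c * μ)) := by ring
    rw [h1, hTradd, hTradd, hTr2]
    ring
  have hre : (faFn Tr m l e γ a (x + y + 2 * μ) - faFn Tr m l e γ b (x + y + 2 * μ))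
      - (faFn Tr m l e γ a x - faFn Tr m l e γ b x)
      - (faFn Tr m l e γ a y - faFn Tr m l e γ b y)
      = (faFn Tr m l e γ a (x + y + 2 * μ) - faFn Tr m l e γ a x - faFn Tr m l e γ a y)
        - (faFn Tr m l e γ b (x + y + 2 * μ) - faFn Tr m l e γ b x
            - faFn Tr m l e γ b y) := by ring
  rw [hre, key a, key b]
  have h2pq : ∀ p q : ZMod 4, 2 * p - 2 * q = 2 * (p + q) := by decide
  rw [h2pq, ← hTradd]
  apply hinj
  rw [hs2, hs2]
  -- now a pure computation in GR4 f
  -- stability facts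
  have hxyF : (x * y) ^ 2 ^ m = x * y := by rw [mul_pow, hxF, hyF]
  have hμF : μ ^ 2 ^ m = μ := by
    rw [hμdef, ← pow_mul, mul_comm (2 ^ (m - 1)) (2 ^ m), pow_mul, hxyF]
  have hμsq : μ ^ 2 = x * y := by
    rw [hμdef, ← pow_mul, ← pow_succ, show m - 1 + 1 = m from by omega, hxyF]
  have hstab : ∀ c : GR4 f, c ^ 2 ^ m = c → s2x m (c * μ) = s2x m (c ^ 2 * (x * y)) := by
    intro c hc
    have hcμ : (c * μ) ^ 2 ^ m = c * μ := by rw [mul_pow, hc, hμF]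
    have hsq : (c * μ) ^ 2 = c ^ 2 * (x * y) := by rw [mul_pow, hμsq]
    rw [← s2x_sq m (c * μ) hcμ, hsq]
  -- per-j identification
  have hperj : ∀ (c : GR4 f), c ^ 2 ^ m = c → ∀ j ∈ Finset.Icc 1 (l - 1),
      s2x m ((∑ i ∈ Finset.Icc 1 ((m / e j - 1) / 2),
            (γ j * c * (x + y + 2 * μ)) ^ (2 ^ (i * e j) + 1))
          - (∑ i ∈ Finset.Icc 1 ((m / e j - 1) / 2),
            (γ j * c * x) ^ (2 ^ (i * e j) + 1))
          - (∑ i ∈ Finset.Icc 1 ((m / e j - 1) / 2),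
            (γ j * c * y) ^ (2 ^ (i * e j) + 1)))
        = s2x m ((γ j * c * y) * ((∑ i ∈ Finset.range (m / e j),
            (γ j * c * x) ^ 2 ^ (i * e j)) + γ j * c * x)) := by
    intro c hc j hj
    have hj1 : 1 ≤ j := (Finset.mem_Icc.mp hj).1
    have hj2 : j ≤ l - 1 := (Finset.mem_Icc.mp hj).2
    have hu : (γ j * c * x) ^ 2 ^ m = γ j * c * x := by
      rw [mul_pow, mul_pow, hγm j hj1 hj2, hc, hxF]
    have hv : (γ j * c * y) ^ 2 ^ m = γ j * c * y := by
      rw [mul_pow, mul_pow, hγm j hj1 hj2, hc, hyF]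
    have H := s2x_jterm h4 m (e j) ((m / e j - 1) / 2) (he1 j hj1 hj2)
      (hmj j hj1 hj2) (γ j * c * x) (γ j * c * y) (γ j * c * μ) hu hv
    rw [← hd j hj1 hj2] at H
    have hbase : γ j * c * (x + y + 2 * μ)
        = γ j * c * x + γ j * c * y + 2 * (γ j * c * μ) := by ring
    rw [hbase]
    exact H
  -- assemble
  rw [s2x_add h4, s2x_add h4, s2x_add h4, s2x_sum h4, s2x_sum h4]
  rw [Finset.sum_congr rfl (hperj a haF), Finset.sum_congr rfl (hperj b hbF)]
  rw [hstab a haF, hstab b hbF]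
  -- right hand side
  have hWR : y * ((a ^ 2 + b ^ 2) * x + ∑ j ∈ Finset.Icc 1 (l - 1),
        (γ j * a * ((∑ i ∈ Finset.range (m / e j), (γ j * a * x) ^ 2 ^ (i * e j))
            + γ j * a * x)
          + γ j * b * ((∑ i ∈ Finset.range (m / e j), (γ j * b * x) ^ 2 ^ (i * e j))
            + γ j * b * x)))
      = (a ^ 2 * (x * y) + b ^ 2 * (x * y))
        + ∑ j ∈ Finset.Icc 1 (l - 1),
          ((γ j * a * y) * ((∑ i ∈ Finset.range (m / e j),
              (γ j * a * x) ^ 2 ^ (i * e j)) + γ j * a * x)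
            + (γ j * b * y) * ((∑ i ∈ Finset.range (m / e j),
              (γ j * b * x) ^ 2 ^ (i * e j)) + γ j * b * x)) := by
    rw [mul_add, Finset.mul_sum]
    congr 1
    · ring
    · exact Finset.sum_congr rfl fun j _ => by ring
  rw [hWR, s2x_add h4, s2x_add h4, s2x_sum h4]
  rw [Finset.sum_congr rfl (fun j _ => s2x_add h4 m _ _), Finset.sum_add_distrib]
  abel
end

section
/- Let e ≥ 1 and let s be an odd positive integer with m = e·s. Define the Boolean quadratic form p : K → 𝔽_2 by p(x) = ∑_{i=1}^{(s−1)/2} tr(x^{2^{ie}+1}), and let T_e : K → K be given by T_e(x) = ∑_{i=0}^{s−1} x^{2^{ei}}. Then for all x, y ∈ K, p(x+y) + p(x) + p(y) = tr( y · ( T_e(x) + x ) ). -/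
open Finset

lemma tr_frob (K : Type) [Field K] [Finite K] [Algebra (ZMod 2) K] [CharP K 2] (z : K) :
    Algebra.trace (ZMod 2) K (z ^ 2) = Algebra.trace (ZMod 2) K z := by
  let σa : K →ₐ[ZMod 2] K :=
    { frobenius K 2 with
      commutes' := fun c => by
        show frobenius K 2 (algebraMap (ZMod 2) K c) = algebraMap (ZMod 2) K c
        rw [frobenius_def, ← map_pow]
        congr 1
        revert c; decide }
  let σ : K ≃ₐ[ZMod 2] K := AlgEquiv.ofBijective σa
    ((Finite.injective_iff_bijective).mp (frobenius K 2).injective)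
  have hσ : ∀ w : K, σ w = w ^ 2 := fun w => rfl
  have : Algebra.trace (ZMod 2) K (σ z) = Algebra.trace (ZMod 2) K z := by
    rw [Algebra.trace_apply, Algebra.trace_apply,
      ← LinearMap.trace_conj' (Algebra.lmul (ZMod 2) K z) σ.toLinearEquiv]
    congr 1
    ext w
    have hsy : ∀ w : K, σ.symm w ^ 2 = w := fun w => by
      rw [← hσ]; exact σ.apply_symm_apply w
    simp [LinearEquiv.conj_apply, hσ, hsy, mul_pow]
  rwa [hσ] at this

lemma tr_frob_pow (K : Type) [Field K] [Finite K] [Algebra (ZMod 2) K] [CharP K 2]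
    (k : ℕ) (z : K) :
    Algebra.trace (ZMod 2) K (z ^ 2 ^ k) = Algebra.trace (ZMod 2) K z := by
  induction k with
  | zero => simp
  | succ n ih => rw [pow_succ, pow_mul, tr_frob, ih]


/-- The symplectic form of the Boolean quadratic form
`p(x) = ∑_{i=1}^{(s−1)/2} tr(x^{2^{ie}+1})` on `K = 𝔽_{2^m}` with `m = e·s`, `s` odd:
`p(x+y) + p(x) + p(y) = tr(y·(T_e(x) + x))`, where `T_e(x) = ∑_{i=0}^{s−1} x^{2^{ei}}`. -/
theorem stmt12 (m : ℕ) (hm : 1 ≤ m) (K : Type) [Field K] [Fintype K]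
    [Algebra (ZMod 2) K] (hcard : Fintype.card K = 2 ^ m)
    (e s : ℕ) (he : 1 ≤ e) (hs : Odd s) (hs1 : 1 ≤ s) (hm' : m = e * s) :
    let tr : K → ZMod 2 := fun y => Algebra.trace (ZMod 2) K y
    let p : K → ZMod 2 := fun x => ∑ i ∈ Finset.Icc 1 ((s - 1) / 2), tr (x ^ (2 ^ (i * e) + 1))
    let Te : K → K := fun x => ∑ i ∈ Finset.range s, x ^ (2 ^ (e * i))
    ∀ x y : K, p (x + y) + p x + p y = tr (y * (Te x + x)) := by
  intro tr p Te x y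
  haveI hchar : CharP K 2 := charP_of_injective_algebraMap (algebraMap (ZMod 2) K).injective 2
  obtain ⟨t, ht⟩ := hs
  subst ht
  set s := 2 * t + 1 with hs_def
  have hst : (s - 1) / 2 = t := by omega
  have htr : ∀ z : K, tr z = Algebra.trace (ZMod 2) K z := fun z => rfl
  have trAdd : ∀ a b : K, tr (a + b) = tr a + tr b := fun a b => map_add _ a b
  have hq : ∀ z : K, z ^ 2 ^ m = z := fun z => by rw [← hcard]; exact FiniteField.pow_card z
  set F : ℕ → ZMod 2 := fun j => tr (y * x ^ 2 ^ (e * j)) with hF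
  -- cross term computation
  have key : ∀ i ∈ Icc 1 t,
      tr ((x + y) ^ (2 ^ (i * e) + 1)) + tr (x ^ (2 ^ (i * e) + 1)) + tr (y ^ (2 ^ (i * e) + 1))
        = F i + F (s - i) := by
    intro i hi
    simp only [mem_Icc] at hi
    have hexp : (x + y) ^ (2 ^ (i * e) + 1)
        = x ^ (2 ^ (i * e) + 1) + y ^ (2 ^ (i * e) + 1)
          + (y * x ^ 2 ^ (i * e) + x * y ^ 2 ^ (i * e)) := by
      rw [pow_succ, add_pow_char_pow]
      ring
    have hcross : tr (x * y ^ 2 ^ (i * e)) = F (s - i) := by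
      rw [hF]; simp only
      rw [htr, htr, ← tr_frob_pow K ((s - i) * e) (x * y ^ 2 ^ (i * e))]
      congr 1
      rw [mul_pow, ← pow_mul, ← pow_add, ← Nat.add_mul, show i + (s - i) = s by omega,
        show s * e = m by rw [hm', mul_comm], hq, mul_comm e (s - i), mul_comm]
    have hF1 : tr (y * x ^ 2 ^ (i * e)) = F i := by
      rw [hF]; simp only [mul_comm i e]
    rw [hexp, trAdd, trAdd, trAdd, ← hcross, ← hF1]
    have : ∀ a b c d : ZMod 2, a + b + (c + d) + a + b = c + d := by decide
    exact this _ _ _ _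
  -- LHS
  have hIcc : ∀ a b : ℕ, Icc (a + 1) b = Ioc a b := fun a b => by
    ext n; simp [mem_Icc, mem_Ioc]
  have lhs_eq : p (x + y) + p x + p y = ∑ i ∈ Icc 1 (2 * t), F i := by
    simp only [p, hst, show (2 * t + 1 - 1) / 2 = t by omega]
    rw [← Finset.sum_add_distrib, ← Finset.sum_add_distrib, Finset.sum_congr rfl key,
      Finset.sum_add_distrib]
    have hre : ∑ i ∈ Icc 1 t, F (s - i) = ∑ j ∈ Icc (t + 1) (2 * t), F j := by
      apply Finset.sum_nbij' (fun i => s - i) (fun j => s - j) <;>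
        intros a ha <;> simp only [mem_Icc] at * <;> first | omega | (congr 1; omega)
    rw [hre, show Icc 1 t = Ioc 0 t from hIcc 0 t, hIcc t (2 * t),
      show Icc 1 (2 * t) = Ioc 0 (2 * t) from hIcc 0 (2 * t)]
    exact Finset.sum_Ioc_consecutive F (by omega) (by omega)
  -- RHS
  have rhs_eq : tr (y * (Te x + x)) = ∑ i ∈ Icc 1 (2 * t), F i := by
    simp only [Te]
    rw [mul_add, Finset.mul_sum, trAdd]
    have h1 : tr (∑ i ∈ range s, y * x ^ 2 ^ (e * i)) = ∑ i ∈ range s, F i := by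
      rw [htr, map_sum]
    rw [h1, hs_def, Finset.sum_range_succ']
    have h2 : F 0 = tr (y * x) := by rw [hF]; simp
    have h3 : ∑ i ∈ range (2 * t), F (i + 1) = ∑ i ∈ Icc 1 (2 * t), F i := by
      rw [show Icc 1 (2 * t) = Ico 1 (2 * t + 1) by rw [Finset.Ico_add_one_right_eq_Icc],
        Finset.sum_Ico_eq_sum_range]
      simp [add_comm]
    rw [h2, h3]
    have : ∀ a b : ZMod 2, a + b + b = a := by decide
    exact this _ _
  rw [lhs_eq, rhs_eq]
end

section
/- Assume m is odd. Then for every Teichmüller element x ∈ F, Tr(x)² − Tr(x) = 2·Tr( ∑_{i=1}^{(m−1)/2} x^{2^i+1} ) in ℤ/4ℤ. (Equivalently, writing Tr(x) = t + 2s with t ∈ {0,1}, the 2-part of the Galois-ring trace of a Teichmüller element x is given by the Boolean quadratic form ∑_{i=1}^{(m−1)/2} tr(x̄^{2^i+1}) of its reduction x̄.) -/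
open Polynomial Finset

lemma aux_frob {R : Type*} [CommRing R] (h4 : (4:R) = 0) (m : ℕ) (hm : 1 ≤ m)
    (σ : R ≃+* R) (y w : R) (hy : y ^ 2 ^ m = y) (hw : σ y - y ^ 2 = 2 * w) :
    σ y = y ^ 2 := by
  have hm' : m - 1 + 1 = m := by omega
  have hexp : 2 ^ m = 2 * 2 ^ (m-1) := by
    conv_lhs => rw [← hm']
    rw [pow_succ]; ring
  have key : ∀ z v : R, (z + 2 * v) ^ 2 = z ^ 2 := by
    intro z v
    have : (4 : R) * (z * v + v * v) = 0 := by rw [h4]; ring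
    linear_combination this
  have hσy : σ y = y ^ 2 + 2 * w := by linear_combination hw
  have h1 : (σ y) ^ 2 ^ m = σ y := by rw [← map_pow, hy]
  calc σ y = (σ y) ^ 2 ^ m := h1.symm
    _ = ((σ y) ^ 2) ^ 2 ^ (m-1) := by rw [← pow_mul, ← hexp]
    _ = ((y ^ 2) ^ 2) ^ 2 ^ (m-1) := by rw [hσy, key]
    _ = (y ^ 2 ^ m) ^ 2 := by
        rw [← pow_mul, ← pow_mul, ← pow_mul]
        congr 1
        rw [hexp]; ring
    _ = y ^ 2 := by rw [hy]

lemma aux_iter {R : Type*} [CommRing R] (h4 : (4:R) = 0) (m : ℕ) (hm : 1 ≤ m)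
    (σ : R ≃+* R) (hσ : ∀ z : R, ∃ w : R, σ z - z ^ 2 = 2 * w)
    (x : R) (hx : x ^ 2 ^ m = x) (i : ℕ) :
    (⇑σ)^[i] x = x ^ 2 ^ i := by
  induction i with
  | zero => simp
  | succ n ih =>
    have hteich : (x ^ 2 ^ n) ^ 2 ^ m = x ^ 2 ^ n := by
      rw [← pow_mul, mul_comm, pow_mul, hx]
    obtain ⟨w, hw⟩ := hσ (x ^ 2 ^ n)
    rw [Function.iterate_succ_apply', ih,
      aux_frob h4 m hm σ _ w hteich hw, ← pow_mul, pow_succ]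

lemma aux_comb {R : Type*} [CommRing R] (m M : ℕ) (hm : m = 2*M+1)
    (x : R) (hx : x ^ 2 ^ m = x) :
    (∑ i ∈ range m, x ^ 2 ^ i) ^ 2 - (∑ i ∈ range m, x ^ 2 ^ i)
      = 2 * ∑ i ∈ range m, ∑ k ∈ Icc 1 M, x ^ (2 ^ (i+k) + 2 ^ i) := by
  have hshift : ∀ t e : ℕ, x ^ (2 ^ (m + t) + e) = x ^ (2 ^ t + e) := by
    intro t e
    rw [pow_add, pow_add, pow_add, pow_mul, hx]
  set g : ℕ × ℕ → R := fun p => x ^ (2 ^ p.1 + 2 ^ p.2) with hg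
  set s : Finset (ℕ × ℕ) := range m ×ˢ range m with hs
  have hsq : (∑ i ∈ range m, x ^ 2 ^ i) ^ 2 = ∑ p ∈ s, g p := by
    rw [sq, Finset.sum_mul_sum, Finset.sum_product]
    simp only [hg, pow_add]
  have hsplit : ∑ p ∈ s, g p
      = ∑ p ∈ s.filter (fun p => p.1 < p.2), g p
        + (∑ p ∈ s.filter (fun p => p.2 < p.1), g p
          + ∑ p ∈ s.filter (fun p => p.1 = p.2), g p) := by
    rw [← Finset.sum_filter_add_sum_filter_not s (fun p => p.1 < p.2) g]
    congr 1
    rw [← Finset.sum_filter_add_sum_filter_not (s.filter (fun p => ¬ p.1 < p.2))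
      (fun p => p.2 < p.1) g, Finset.filter_filter, Finset.filter_filter]
    congr 1
    · apply Finset.sum_congr _ (fun _ _ => rfl)
      apply Finset.filter_congr
      intro p _
      omega
    · apply Finset.sum_congr _ (fun _ _ => rfl)
      apply Finset.filter_congr
      intro p _
      omega
  have hdiag : ∑ p ∈ s.filter (fun p => p.1 = p.2), g p = ∑ i ∈ range m, x ^ 2 ^ i := by
    have h1 : ∑ p ∈ s.filter (fun p => p.1 = p.2), g p
        = ∑ i ∈ range m, x ^ 2 ^ (i+1) := by
      apply Finset.sum_nbij' (fun p => p.1) (fun i => (i, i))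
      · intro p hp
        simp only [hs, Finset.mem_filter, Finset.mem_product, Finset.mem_range] at hp ⊢
        exact hp.1.1
      · intro i hi
        simp only [hs, Finset.mem_filter, Finset.mem_product, Finset.mem_range] at hi ⊢
        exact ⟨⟨hi, hi⟩, trivial⟩
      · intro p hp
        simp only [hs, Finset.mem_filter] at hp
        exact Prod.ext rfl hp.2
      · intro i _; rfl
      · intro p hp
        simp only [hs, Finset.mem_filter] at hp
        simp only [hg, ← hp.2]
        congr 1
        rw [pow_succ]; ring
    rw [h1]
    have e1 := Finset.sum_range_succ' (fun i => x ^ 2 ^ i) m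
    have e2 := Finset.sum_range_succ (fun i => x ^ 2 ^ i) m
    simp only [pow_zero, pow_one] at e1 e2
    rw [hx] at e2
    linear_combination e2 - e1
  have hswap : ∑ p ∈ s.filter (fun p => p.2 < p.1), g p
      = ∑ p ∈ s.filter (fun p => p.1 < p.2), g p := by
    apply Finset.sum_nbij' (fun p => (p.2, p.1)) (fun p => (p.2, p.1))
    · intro p hp
      simp only [hs, Finset.mem_filter, Finset.mem_product, Finset.mem_range] at hp ⊢
      exact ⟨⟨hp.1.2, hp.1.1⟩, hp.2⟩
    · intro p hp
      simp only [hs, Finset.mem_filter, Finset.mem_product, Finset.mem_range] at hp ⊢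
      exact ⟨⟨hp.1.2, hp.1.1⟩, hp.2⟩
    · intro p _; rfl
    · intro p _; rfl
    · intro p _
      simp only [hg]
      congr 1
      ring
  have hbij : ∑ p ∈ s.filter (fun p => p.1 < p.2), g p
      = ∑ q ∈ range m ×ˢ Icc 1 M, x ^ (2 ^ (q.1+q.2) + 2 ^ q.1) := by
    apply Finset.sum_nbij'
      (fun p => if p.2 - p.1 ≤ M then (p.1, p.2 - p.1) else (p.2, m - (p.2 - p.1)))
      (fun q => if q.1 + q.2 < m then (q.1, q.1 + q.2) else (q.1 + q.2 - m, q.1))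
    · intro p hp
      simp only [hs, Finset.mem_filter, Finset.mem_product, Finset.mem_range] at hp
      obtain ⟨⟨h1, h2⟩, h3⟩ := hp
      split <;>
        simp only [Finset.mem_product, Finset.mem_range, Finset.mem_Icc] <;> omega
    · intro q hq
      simp only [Finset.mem_product, Finset.mem_range, Finset.mem_Icc] at hq
      obtain ⟨h1, h2, h3⟩ := hq
      split <;>
        simp only [hs, Finset.mem_filter, Finset.mem_product, Finset.mem_range] <;> omega
    · intro p hp
      simp only [hs, Finset.mem_filter, Finset.mem_product, Finset.mem_range] at hp
      obtain ⟨⟨h1, h2⟩, h3⟩ := hp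
      split
      · next h =>
        have : p.1 + (p.2 - p.1) < m := by omega
        simp only [this, if_true]
        ext <;> simp <;> omega
      · next h =>
        have : ¬ (p.2 + (m - (p.2 - p.1)) < m) := by omega
        simp only [this, if_false]
        ext <;> simp <;> omega
    · intro q hq
      simp only [Finset.mem_product, Finset.mem_range, Finset.mem_Icc] at hq
      obtain ⟨h1, h2, h3⟩ := hq
      split
      · next h =>
        have : q.1 + q.2 - q.1 ≤ M := by omega
        simp only [this, if_true]
        ext <;> simp <;> omega
      · next h =>
        have : ¬ (q.1 - (q.1 + q.2 - m) ≤ M) := by omega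
        simp only [this, if_false]
        ext <;> simp <;> omega
    · intro p hp
      simp only [hs, Finset.mem_filter, Finset.mem_product, Finset.mem_range] at hp
      obtain ⟨⟨h1, h2⟩, h3⟩ := hp
      split
      · next h =>
        simp only [hg]
        have : p.1 + (p.2 - p.1) = p.2 := by omega
        rw [this]
        congr 1
        ring
      · next h =>
        have h4 : p.2 + (m - (p.2 - p.1)) = m + p.1 := by omega
        simp only [hg, h4, hshift]
  rw [hsq, hsplit, hdiag, hswap, hbij, Finset.sum_product]
  ring


lemma aux_inj (m : ℕ) (hm : 1 ≤ m) (f : Polynomial (ZMod 4)) (hmon : f.Monic)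
    (hdeg : f.natDegree = m) :
    Function.Injective (algebraMap (ZMod 4) (GR4 f)) := by
  have h0 : ∀ c : ZMod 4, algebraMap (ZMod 4) (GR4 f) c = 0 → c = 0 := by
    intro c hc
    have hc' : (Ideal.Quotient.mk (Ideal.span {f})) (C c) = 0 := hc
    rw [Ideal.Quotient.eq_zero_iff_mem, Ideal.mem_span_singleton] at hc'
    obtain ⟨g, hg⟩ := hc'
    by_contra hne
    have hg0 : g ≠ 0 := by
      rintro rfl
      simp only [mul_zero] at hg
      exact hne (by simpa using hg)
    have hlc : f.leadingCoeff * g.leadingCoeff ≠ 0 := by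
      rw [hmon.leadingCoeff, one_mul]
      exact leadingCoeff_ne_zero.2 hg0
    have := natDegree_mul' hlc
    rw [← hg, natDegree_C, hdeg] at this
    omega
  intro a b hab
  have h : algebraMap (ZMod 4) (GR4 f) (a - b) = 0 := by rw [map_sub, hab, sub_self]
  exact sub_eq_zero.mp (h0 _ h)

/-- For `m` odd and a Teichmüller element `x` of `GR(4,m)`,
`Tr(x)² − Tr(x) = 2·Tr(∑_{i=1}^{(m−1)/2} x^{2^i+1})` in `ℤ/4ℤ`:
the `2`-part of the Galois-ring trace of a Teichmüller element is given by the
Boolean quadratic form `∑_{i=1}^{(m−1)/2} tr(x̄^{2^i+1})` of its reduction. -/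
theorem stmt14 (m : ℕ) (hm : 1 ≤ m) (hmodd : Odd m)
    (f : Polynomial (ZMod 4)) (hmon : f.Monic) (hdeg : f.natDegree = m)
    (hirr : Irreducible (f.map (ZMod.castHom (show (2:ℕ) ∣ 4 by norm_num) (ZMod 2))))
    (σ : GR4 f ≃+* GR4 f) (hσ : ∀ z : GR4 f, ∃ w : GR4 f, σ z - z ^ 2 = 2 * w)
    (Tr : GR4 f → ZMod 4)
    (hTr : ∀ z : GR4 f,
      algebraMap (ZMod 4) (GR4 f) (Tr z) = ∑ i ∈ Finset.range m, (⇑σ)^[i] z)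
    (x : GR4 f) (hx : x ^ 2 ^ m = x) :
    Tr x ^ 2 - Tr x = 2 * Tr (∑ i ∈ Finset.Icc 1 ((m - 1) / 2), x ^ (2 ^ i + 1)) := by
  have h4 : (4 : GR4 f) = 0 := by
    have h1 : (4 : GR4 f) = algebraMap (ZMod 4) (GR4 f) (4 : ZMod 4) := (map_ofNat _ 4).symm
    rw [h1, show (4 : ZMod 4) = 0 from by decide, map_zero]
  obtain ⟨t, ht⟩ := hmodd
  set M := (m - 1) / 2 with hMdef
  have hM : m = 2 * M + 1 := by omega
  set S := ∑ i ∈ Finset.Icc 1 M, x ^ (2 ^ i + 1) with hSdef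
  apply aux_inj m hm f hmon hdeg
  rw [map_sub, map_pow, map_mul, map_ofNat, hTr x, hTr S]
  have hxiter : ∀ i, (⇑σ)^[i] x = x ^ 2 ^ i := aux_iter h4 m hm σ hσ x hx
  have hSiter : ∀ i, (⇑σ)^[i] S = ∑ k ∈ Icc 1 M, x ^ (2 ^ (i+k) + 2 ^ i) := by
    intro i
    induction i with
    | zero =>
      simp only [Function.iterate_zero, id_eq, hSdef]
      apply Finset.sum_congr rfl
      intro k _
      simp [add_comm]
    | succ n ih =>
      obtain ⟨w, hw⟩ := hσ x
      have hfx : σ x = x ^ 2 := aux_frob h4 m hm σ x w hx hw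
      rw [Function.iterate_succ_apply', ih, map_sum]
      apply Finset.sum_congr rfl
      intro k _
      rw [map_pow, hfx, ← pow_mul]
      congr 1
      ring
  rw [Finset.sum_congr rfl (fun i _ => hxiter i),
    Finset.sum_congr rfl (fun i _ => hSiter i)]
  exact aux_comb m M hM x hx
end
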